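/- arXiv:1803.03105 — 7 statements merged into one kernel-verified Lean document; each statement's English description precedes it below -/
import Mathlib

section
/- Let a : ℕ → ℝ be a sequence with a_k ≥ 0 for all k and Σ_{k=0}^∞ a_k < ∞, and define f : [-1,1] → ℝ by f(t) = Σ_{k=0}^∞ a_k t^k. Then the kernel (x,y) ∈ S^∞ × S^∞ ↦ f(⟨x,y⟩) is strictly positive definite on S^∞ if, and only if, the set {k ∈ ℕ : a_k > 0} contains infinitely many even integers and infinitely many odd integers. -/
/-!
Expanding `f`, the quadratic form `∑ cᵢ cⱼ f ⟪xᵢ, xⱼ⟫` equals `∑ₖ aₖ Qₖ` with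
`Qₖ = ∑ cᵢ cⱼ ⟪xᵢ, xⱼ⟫ ^ k`, and `Qₖ ≥ 0` by the Schur product theorem. For distinct unit vectors
`⟪xᵢ, xⱼ⟫ = 1` only on the diagonal, so `Qₖ - (∑ cᵢ² + (-1) ^ k S)` tends to `0`, where `S` collects
the pairs with `⟪xᵢ, xⱼ⟫ = -1`. If `Qₖ = 0` for infinitely many even and infinitely many odd `k`
with `aₖ > 0`, then `∑ cᵢ² ± S = 0`, hence `c = 0`.

Conversely, if every `k` with `aₖ > 0` satisfies `k < m` or has the parity opposite to `m`, take the
vertices `ζ ^ j` of a regular `2m`-gon in a plane with signs `(-1) ^ j`. Writing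
`2 ⟪u, v⟫ = u v̄ + ū v` and expanding the `k`-th power, `Qₖ` becomes a combination of products
of geometric sums with ratios `ζ ^ (m + 2l - k)`, `0 ≤ l ≤ k`. For such `k` none of these ratios is
`1`, so every `Qₖ` with `aₖ > 0` vanishes.
-/

open scoped BigOperators RealInnerProductSpace

noncomputable section

/-- A real kernel `K` on `X` is positive definite. -/
def IsPosDefKernel {X : Type*} (K : X → X → ℝ) : Prop :=
  ∀ (n : ℕ) (x : Fin n → X) (c : Fin n → ℝ),
    0 ≤ ∑ i, ∑ j, c i * c j * K (x i) (x j)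

/-- A real kernel `K` on `X` is strictly positive definite. -/
def IsStrictPosDefKernel {X : Type*} (K : X → X → ℝ) : Prop :=
  IsPosDefKernel K ∧
    ∀ (n : ℕ) (x : Fin n → X) (c : Fin n → ℝ),
      Function.Injective x → c ≠ 0 →
        0 < ∑ i, ∑ j, c i * c j * K (x i) (x j)

/-- The real Hilbert space `ℓ²` of square-summable real sequences. -/
abbrev EllTwo : Type := lp (fun _ : ℕ => ℝ) 2

open Filter Finset Topology ComplexConjugate

theorem IsStrictPosDefKernel.comp {X Y : Type*} {K : Y → Y → ℝ} (hK : IsStrictPosDefKernel K)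
    {g : X → Y} (hg : Function.Injective g) : IsStrictPosDefKernel fun x x' => K (g x) (g x') :=
  ⟨fun n x c => hK.1 n (g ∘ x) c, fun n x c hx hc => hK.2 n (g ∘ x) c (hg.comp hx) hc⟩

theorem Matrix.PosSemidef.map_pow {ι : Type*} [Fintype ι] {A : Matrix ι ι ℝ} (hA : A.PosSemidef)
    (k : ℕ) : (A.map (· ^ k)).PosSemidef := by
  induction k with
  | zero =>
    have : A.map (· ^ 0) = Matrix.gram ℝ (fun _ : ι => (1 : ℝ)) := by ext; simp [Matrix.gram]
    rw [this]; exact Matrix.posSemidef_gram ℝ _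
  | succ k ih =>
    have : A.map (· ^ (k + 1)) = Matrix.hadamard (A.map (· ^ k)) A := by ext; simp [pow_succ]
    rw [this]; exact ih.hadamard hA

theorem summable_mul_pow_of_abs_le_one {a : ℕ → ℝ} (ha : ∀ k, 0 ≤ a k) (hsa : Summable a)
    {t : ℝ} (ht : |t| ≤ 1) : Summable fun k => a k * t ^ k := by
  refine Summable.of_norm_bounded hsa fun k => ?_
  rw [norm_mul, norm_pow, Real.norm_of_nonneg (ha k), Real.norm_eq_abs]
  exact mul_le_of_le_one_right (ha k) (pow_le_one₀ (abs_nonneg t) ht)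

theorem geom_sum_eq_zero_of_pow_eq_one {R : Type*} [Field R] {w : R} {n : ℕ} (hw : w ^ n = 1)
    (hw1 : w ≠ 1) : ∑ i ∈ range n, w ^ i = 0 := by
  rw [geom_sum_eq hw1, hw, sub_self, zero_div]

theorem Set.exists_forall_lt_or_odd_add {S : Set ℕ}
    (h : (S ∩ {n | Even n}).Finite ∨ (S ∩ {n | Odd n}).Finite) :
    ∃ m, 0 < m ∧ ∀ k ∈ S, k < m ∨ Odd (k + m) := by
  rcases h with h | h <;> obtain ⟨M, hM⟩ := h.bddAbove
  · refine ⟨2 * M + 2, by omega, fun k hk => ?_⟩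
    rcases Nat.even_or_odd k with he | ho
    · exact Or.inl (by have := hM ⟨hk, he⟩; omega)
    · exact Or.inr (ho.add_even ⟨M + 1, by ring⟩)
  · refine ⟨2 * M + 1, by omega, fun k hk => ?_⟩
    rcases Nat.even_or_odd k with he | ho
    · exact Or.inr (he.add_odd ⟨M, rfl⟩)
    · exact Or.inl (by have := hM ⟨hk, ho⟩; omega)

theorem tendsto_pow_sub_ite_of_abs_le_one {t : ℝ} (ht : |t| ≤ 1) :
    Tendsto (fun k : ℕ => t ^ k - ((if t = 1 then 1 else 0) + (-1) ^ k * if t = -1 then 1 else 0))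
      atTop (𝓝 0) := by
  by_cases h1 : t = 1
  · norm_num [h1]
  by_cases h2 : t = -1
  · norm_num [h2]
  have hlt : |t| < 1 := lt_of_le_of_ne ht fun h => (abs_eq zero_le_one).mp h |>.elim h1 h2
  simpa [h1, h2] using tendsto_pow_atTop_nhds_zero_of_abs_lt_one hlt

theorem tendsto_sum_mul_pow_sub {κ : Type*} [Fintype κ] (w t : κ → ℝ) (ht : ∀ p, |t p| ≤ 1) :
    Tendsto (fun k : ℕ => ∑ p, w p * t p ^ k -
      (∑ p with t p = 1, w p + (-1) ^ k * ∑ p with t p = -1, w p)) atTop (𝓝 0) := by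
  have h := tendsto_finsetSum univ fun p _ =>
    (tendsto_pow_sub_ite_of_abs_le_one (ht p)).const_mul (w p)
  simp only [mul_zero, sum_const_zero] at h
  refine h.congr fun k => ?_
  simp only [sum_filter, mul_sum, ← sum_add_distrib, ← sum_sub_distrib]
  refine sum_congr rfl fun p _ => ?_
  split_ifs <;> ring

theorem sum_filter_eq_one_eq_zero_of_frequently {κ : Type*} [Fintype κ] {w t : κ → ℝ}
    (ht : ∀ p, |t p| ≤ 1)
    (heven : ∃ᶠ k in atTop, Even k ∧ ∑ p, w p * t p ^ k = 0)
    (hodd : ∃ᶠ k in atTop, Odd k ∧ ∑ p, w p * t p ^ k = 0) :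
    ∑ p with t p = 1, w p = 0 := by
  have hR := tendsto_sum_mul_pow_sub w t ht
  set S₁ := ∑ p with t p = 1, w p
  set S₂ := ∑ p with t p = -1, w p
  have h₁ : (0 : ℝ) ∈ ({-(S₁ + S₂)} : Set ℝ) :=
    isClosed_singleton.mem_of_frequently_of_tendsto
      (heven.mono fun k ⟨hk, h0⟩ => by simp [h0, hk.neg_one_pow]) hR
  have h₂ : (0 : ℝ) ∈ ({-(S₁ - S₂)} : Set ℝ) :=
    isClosed_singleton.mem_of_frequently_of_tendsto
      (hodd.mono fun k ⟨hk, h0⟩ => by simp [h0, hk.neg_one_pow]; ring) hR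
  simp only [Set.mem_singleton_iff] at h₁ h₂
  linarith

section GramPow

variable {E ι : Type*} [NormedAddCommGroup E] [InnerProductSpace ℝ E] [Fintype ι]

def gramPowForm (x : ι → E) (c : ι → ℝ) (k : ℕ) : ℝ :=
  ∑ i, ∑ j, c i * c j * ⟪x i, x j⟫ ^ k

theorem gramPowForm_nonneg (x : ι → E) (c : ι → ℝ) (k : ℕ) : 0 ≤ gramPowForm x c k := by
  have h := ((Matrix.posSemidef_gram ℝ x).map_pow k).dotProduct_mulVec_nonneg c
  have hform : gramPowForm x c k = star c ⬝ᵥ ((Matrix.gram ℝ x).map (· ^ k)).mulVec c := by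
    simp only [gramPowForm, dotProduct, Matrix.mulVec, Matrix.map_apply, Matrix.gram_apply,
      star_trivial, mul_sum]
    exact sum_congr rfl fun i _ => sum_congr rfl fun j _ => by ring
  exact hform ▸ h

theorem abs_inner_le_one {x y : E} (hx : ‖x‖ = 1) (hy : ‖y‖ = 1) : |⟪x, y⟫| ≤ 1 := by
  simpa [hx, hy] using abs_real_inner_le_norm x y

theorem eq_zero_of_frequently_gramPowForm_eq_zero {x : ι → E} (hx : ∀ i, ‖x i‖ = 1)
    (hinj : Function.Injective x) {c : ι → ℝ}
    (heven : ∃ᶠ k in atTop, Even k ∧ gramPowForm x c k = 0)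
    (hodd : ∃ᶠ k in atTop, Odd k ∧ gramPowForm x c k = 0) : c = 0 := by
  classical
  have hform (k : ℕ) :
      gramPowForm x c k = ∑ p : ι × ι, c p.1 * c p.2 * ⟪x p.1, x p.2⟫ ^ k := by
    rw [gramPowForm, Fintype.sum_prod_type]
  have hdiag := sum_filter_eq_one_eq_zero_of_frequently (w := fun p : ι × ι => c p.1 * c p.2)
    (t := fun p => ⟪x p.1, x p.2⟫) (fun p => abs_inner_le_one (hx p.1) (hx p.2))
    (by simpa only [hform] using heven) (by simpa only [hform] using hodd)
  have hsq : ∑ i, c i * c i = 0 := by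
    simpa [inner_eq_one_iff_of_norm_eq_one (hx _) (hx _), hinj.eq_iff, sum_filter,
      Fintype.sum_prod_type] using hdiag
  funext i
  exact mul_self_eq_zero.mp
    (congrFun ((Fintype.sum_eq_zero_iff_of_nonneg fun j => mul_self_nonneg (c j)).mp hsq) i)

theorem hasSum_mul_gramPowForm {a : ℕ → ℝ} {f : ℝ → ℝ} (ha : ∀ k, 0 ≤ a k) (hsa : Summable a)
    (hf : ∀ t ∈ Set.Icc (-1 : ℝ) 1, f t = ∑' k : ℕ, a k * t ^ k)
    {x : ι → E} (hx : ∀ i, ‖x i‖ = 1) (c : ι → ℝ) :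
    HasSum (fun k => a k * gramPowForm x c k) (∑ i, ∑ j, c i * c j * f ⟪x i, x j⟫) := by
  have hpow (i j : ι) : HasSum (fun k => a k * ⟪x i, x j⟫ ^ k) (f ⟪x i, x j⟫) := by
    have ht := abs_inner_le_one (hx i) (hx j)
    rw [hf _ (abs_le.mp ht)]
    exact (summable_mul_pow_of_abs_le_one ha hsa ht).hasSum
  have h := hasSum_sum (s := univ) fun i _ =>
    hasSum_sum (s := univ) fun j _ => (hpow i j).mul_left (c i * c j)
  refine h.congr_fun fun k => ?_
  simp only [gramPowForm, mul_sum]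
  exact sum_congr rfl fun i _ => sum_congr rfl fun j _ => by ring

end GramPow

section Circle

variable {ι : Type*} [Fintype ι]

theorem two_pow_mul_gramPowForm (u : ι → ℂ) (c : ι → ℝ) (k : ℕ) :
    (2 : ℂ) ^ k * gramPowForm u c k = ∑ l ∈ range (k + 1), (k.choose l : ℂ) *
      (∑ i, c i * (u i ^ l * conj (u i) ^ (k - l))) *
        ∑ j, c j * (conj (u j) ^ l * u j ^ (k - l)) := by
  have h2 (i j : ι) : 2 * (⟪u i, u j⟫ : ℂ) = u i * conj (u j) + conj (u i) * u j := by
    rw [Complex.inner, Complex.re_eq_add_conj]; simp; ring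
  calc (2 : ℂ) ^ k * gramPowForm u c k
      = ∑ i, ∑ j, c i * c j * (u i * conj (u j) + conj (u i) * u j) ^ k := by
        simp only [gramPowForm, ← h2, Complex.ofReal_sum, Complex.ofReal_mul, Complex.ofReal_pow,
          mul_sum, mul_pow]
        exact sum_congr rfl fun i _ => sum_congr rfl fun j _ => by ring
    _ = ∑ i, ∑ j, ∑ l ∈ range (k + 1), (k.choose l : ℂ) *
          (c i * (u i ^ l * conj (u i) ^ (k - l))) * (c j * (conj (u j) ^ l * u j ^ (k - l))) := by
        simp only [add_pow, mul_sum]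
        exact sum_congr rfl fun i _ => sum_congr rfl fun j _ => sum_congr rfl fun l _ => by ring
    _ = ∑ l ∈ range (k + 1), ∑ i, ∑ j, (k.choose l : ℂ) *
          (c i * (u i ^ l * conj (u i) ^ (k - l))) * (c j * (conj (u j) ^ l * u j ^ (k - l))) := by
        simp_rw [sum_comm (s := (univ : Finset ι)) (t := range (k + 1))]
    _ = _ := by
        refine sum_congr rfl fun l _ => ?_
        rw [mul_assoc, sum_mul_sum, mul_sum]
        simp only [mul_sum, mul_assoc]

theorem gramPowForm_eq_zero_of_moments {u : ι → ℂ} {c : ι → ℝ} {k : ℕ}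
    (h : ∀ l ≤ k, ∑ i, c i * (u i ^ l * conj (u i) ^ (k - l)) = 0) : gramPowForm u c k = 0 := by
  have h2k := two_pow_mul_gramPowForm u c k
  rw [sum_eq_zero fun l hl => by
      rw [h l (Nat.lt_succ_iff.mp (mem_range.mp hl)), mul_zero, zero_mul], mul_eq_zero] at h2k
  exact_mod_cast h2k.resolve_left (pow_ne_zero k two_ne_zero)

theorem IsPrimitiveRoot.gramPowForm_alternating_eq_zero {ζ : ℂ} {m : ℕ}
    (hζ : IsPrimitiveRoot ζ (2 * m)) (hm : 0 < m) {k : ℕ} (hk : k < m ∨ Odd (k + m)) :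
    gramPowForm (fun i : Fin (2 * m) => ζ ^ (i : ℕ)) (fun i => (-1) ^ (i : ℕ)) k = 0 := by
  have h2m : 2 * m ≠ 0 := by omega
  have hζm : ζ ^ m = -1 := by
    have h := hζ.pow_of_dvd hm.ne' (dvd_mul_left m 2)
    rw [Nat.mul_div_cancel _ hm] at h
    exact h.eq_neg_one_of_two_right
  have hconj : conj ζ * ζ = 1 := by
    rw [Complex.conj_mul', hζ.norm'_eq_one h2m]; simp
  refine gramPowForm_eq_zero_of_moments fun l hl => ?_
  set w := ζ ^ m * ζ ^ l * conj ζ ^ (k - l)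
  have hw : w ^ (2 * m) = 1 := by
    have h1 (n : ℕ) : (ζ ^ n) ^ (2 * m) = 1 := by
      rw [← pow_mul, mul_comm, pow_mul, hζ.pow_eq_one, one_pow]
    simp only [w, mul_pow, ← map_pow, h1, map_one, mul_one]
  -- `w = ζ ^ (m + 2l - k)`, and the hypothesis on `k` keeps `m + 2l - k` off the multiples of `2m`.
  have hw1 : w ≠ 1 := by
    intro h
    have hpow : ζ ^ (m + l) = ζ ^ (k - l) := by
      calc ζ ^ (m + l) = w * ζ ^ (k - l) := by
            rw [pow_add, mul_assoc, ← mul_pow, hconj, one_pow, mul_one]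
        _ = ζ ^ (k - l) := by rw [h, one_mul]
    rw [(hζ.isOfFinOrder h2m).pow_inj_mod, ← hζ.eq_orderOf] at hpow
    rcases hk with hk | hk
    · rw [Nat.mod_eq_of_lt (by omega), Nat.mod_eq_of_lt (by omega)] at hpow
      omega
    · have h2 := congrArg (· % 2) hpow
      simp only [Nat.mod_mod_of_dvd _ (dvd_mul_right 2 m)] at h2
      obtain ⟨r, hr⟩ := hk
      omega
  calc ∑ i : Fin (2 * m),
        (((-1) ^ (i : ℕ) : ℝ) : ℂ) * ((ζ ^ (i : ℕ)) ^ l * conj (ζ ^ (i : ℕ)) ^ (k - l))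
      = ∑ i ∈ range (2 * m), w ^ i := by
        rw [← Fin.sum_univ_eq_sum_range (fun i => w ^ i)]
        refine sum_congr rfl fun i _ => ?_
        simp only [w, mul_pow, map_pow]
        push_cast
        rw [← hζm]
        ring
    _ = 0 := geom_sum_eq_zero_of_pow_eq_one hw hw1

end Circle

def complexToEllTwo : ℂ →ₗᵢ[ℝ] EllTwo :=
  (Complex.reLm.smulRight (lp.single 2 0 1) +
      Complex.imLm.smulRight (lp.single 2 1 1)).isometryOfInner fun z w => by
    simp [inner_add_left, inner_add_right, real_inner_smul_left, real_inner_smul_right,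
      lp.inner_single_left, Complex.inner]

section PowerSeriesKernel

variable {E : Type*} [NormedAddCommGroup E] [InnerProductSpace ℝ E] {a : ℕ → ℝ} {f : ℝ → ℝ}

theorem isStrictPosDefKernel_sphere_of_infinite (ha : ∀ k, 0 ≤ a k) (hsa : Summable a)
    (hf : ∀ t ∈ Set.Icc (-1 : ℝ) 1, f t = ∑' k : ℕ, a k * t ^ k)
    (heven : ({k : ℕ | 0 < a k} ∩ {n : ℕ | Even n}).Infinite)
    (hodd : ({k : ℕ | 0 < a k} ∩ {n : ℕ | Odd n}).Infinite) :
    IsStrictPosDefKernel fun x y : Metric.sphere (0 : E) 1 => f ⟪(x : E), (y : E)⟫ := by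
  refine ⟨fun n x c => ?_, fun n x c hinj hc => ?_⟩
  · exact (hasSum_mul_gramPowForm ha hsa hf (fun i => norm_eq_of_mem_sphere (x i)) c).nonneg
      fun k => mul_nonneg (ha k) (gramPowForm_nonneg _ c k)
  set Q := gramPowForm (fun i => (x i : E)) c
  have hsum := hasSum_mul_gramPowForm ha hsa hf (fun i => norm_eq_of_mem_sphere (x i)) c
  by_cases hQ : ∀ k, 0 < a k → Q k = 0
  · have hfreq {p : ℕ → Prop} (hp : ({k : ℕ | 0 < a k} ∩ {n | p n}).Infinite) :
        ∃ᶠ k in atTop, p k ∧ Q k = 0 :=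
      (Nat.frequently_atTop_iff_infinite.mpr hp).mono fun k ⟨hk, hpk⟩ => ⟨hpk, hQ k hk⟩
    exact absurd (eq_zero_of_frequently_gramPowForm_eq_zero (fun i => norm_eq_of_mem_sphere (x i))
      (Subtype.val_injective.comp hinj) (hfreq heven) (hfreq hodd)) hc
  obtain ⟨k, hak, hQk⟩ : ∃ k, 0 < a k ∧ Q k ≠ 0 := by simpa using hQ
  exact hasSum_lt (f := 0) (i := k) (fun j => mul_nonneg (ha j) (gramPowForm_nonneg _ c j))
    (mul_pos hak ((gramPowForm_nonneg _ c k).lt_of_ne' hQk)) hasSum_zero hsum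

theorem not_isStrictPosDefKernel_circle (ha : ∀ k, 0 ≤ a k) (hsa : Summable a)
    (hf : ∀ t ∈ Set.Icc (-1 : ℝ) 1, f t = ∑' k : ℕ, a k * t ^ k) {m : ℕ} (hm : 0 < m)
    (hgood : ∀ k, 0 < a k → k < m ∨ Odd (k + m)) :
    ¬ IsStrictPosDefKernel fun z w : Metric.sphere (0 : ℂ) 1 => f ⟪(z : ℂ), (w : ℂ)⟫ := by
  intro h
  obtain ⟨ζ, hζ⟩ : ∃ ζ : ℂ, IsPrimitiveRoot ζ (2 * m) :=
    ⟨_, Complex.isPrimitiveRoot_exp (2 * m) (by omega)⟩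
  let x : Fin (2 * m) → Metric.sphere (0 : ℂ) 1 := fun i =>
    ⟨ζ ^ (i : ℕ), by simp [norm_pow, hζ.norm'_eq_one (by omega)]⟩
  let c : Fin (2 * m) → ℝ := fun i => (-1) ^ (i : ℕ)
  have hinj : Function.Injective x := fun i j hij =>
    Fin.ext (hζ.pow_inj i.2 j.2 (congrArg Subtype.val hij))
  have hc : c ≠ 0 := fun h0 => by simpa [c] using congrFun h0 ⟨0, by omega⟩
  have hsum := hasSum_mul_gramPowForm ha hsa hf (x := fun i => (x i : ℂ))
    (fun i => norm_eq_of_mem_sphere (x i)) c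
  have hterms k : a k * gramPowForm (fun i => (x i : ℂ)) c k = 0 := by
    rcases (ha k).eq_or_lt with h0 | h0
    · rw [← h0, zero_mul]
    · rw [hζ.gramPowForm_alternating_eq_zero hm (hgood k h0), mul_zero]
  rw [funext hterms] at hsum
  exact (h.2 _ x c hinj hc).ne' (hsum.unique hasSum_zero)

theorem infinite_of_isStrictPosDefKernel_sphere (L : ℂ →ₗᵢ[ℝ] E) (ha : ∀ k, 0 ≤ a k)
    (hsa : Summable a) (hf : ∀ t ∈ Set.Icc (-1 : ℝ) 1, f t = ∑' k : ℕ, a k * t ^ k)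
    (h : IsStrictPosDefKernel fun x y : Metric.sphere (0 : E) 1 => f ⟪(x : E), (y : E)⟫) :
    ({k : ℕ | 0 < a k} ∩ {n : ℕ | Even n}).Infinite ∧
      ({k : ℕ | 0 < a k} ∩ {n : ℕ | Odd n}).Infinite := by
  have hcircle :
      IsStrictPosDefKernel fun z w : Metric.sphere (0 : ℂ) 1 => f ⟪(z : ℂ), (w : ℂ)⟫ := by
    have := h.comp (g := fun z : Metric.sphere (0 : ℂ) 1 =>
        (⟨L z, by simp⟩ : Metric.sphere (0 : E) 1))
      fun z w hzw => Subtype.ext (L.injective (congrArg Subtype.val hzw))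
    simpa only [L.inner_map_map] using this
  by_contra hfin
  obtain ⟨m, hm, hgood⟩ := Set.exists_forall_lt_or_odd_add
    ((not_and_or.mp hfin).imp Set.not_infinite.mp Set.not_infinite.mp)
  exact not_isStrictPosDefKernel_circle ha hsa hf hm hgood hcircle

end PowerSeriesKernel

theorem spd_on_infinite_sphere
    (a : ℕ → ℝ) (ha : ∀ k, 0 ≤ a k) (hsa : Summable a)
    (f : ℝ → ℝ)
    (hf : ∀ t ∈ Set.Icc (-1 : ℝ) 1, f t = ∑' k : ℕ, a k * t ^ k) :
    IsStrictPosDefKernel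
      (fun x y : Metric.sphere (0 : EllTwo) 1 => f ⟪(x : EllTwo), (y : EllTwo)⟫) ↔
    ({k : ℕ | 0 < a k} ∩ {n : ℕ | Even n}).Infinite ∧
      ({k : ℕ | 0 < a k} ∩ {n : ℕ | Odd n}).Infinite :=
  ⟨infinite_of_isStrictPosDefKernel_sphere complexToEllTwo ha hsa hf,
    fun h => isStrictPosDefKernel_sphere_of_infinite ha hsa hf h.1 h.2⟩
end
end

section
/- Let a : ℕ → ℝ be a sequence with a_k ≥ 0 for all k and Σ_{k=0}^∞ a_k < ∞, define f : [-1,1] → ℝ by f(t) = Σ_{k=0}^∞ a_k t^k, and let λ ∈ ℝ. Then the kernel ((u,x),(v,y)) ∈ (ℝ × S^∞)² ↦ f(⟨x,y⟩ · cos(λ(u−v))) is NOT strictly positive definite on ℝ × S^∞: there exist finitely many pairwise distinct points in ℝ × S^∞ and a nonzero complex coefficient vector for which the associated quadratic form vanishes. -/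
/-! The kernel depends on the time coordinates only through `cos (lam * (u - v))`, which is
periodic in `u`. Hence the two distinct points `(0, y)` and `(T, y)`, for a nonzero period `T`,
have the same kernel row, and the coefficients `1, -1` on them make the quadratic form vanish. -/

open scoped BigOperators RealInnerProductSpace ComplexConjugate

noncomputable section

theorem exists_quadratic_form_eq_zero_of_kernel_row_eq {X : Type*} (K : X → X → ℂ) {p q : X}
    (hpq : p ≠ q) (hrow : K p = K q) :
    ∃ (n : ℕ) (x : Fin n → X) (c : Fin n → ℂ),
      Function.Injective x ∧ c ≠ 0 ∧ ∑ i, ∑ j, c i * conj (c j) * K (x i) (x j) = 0 := by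
  refine ⟨2, ![p, q], ![1, -1], ?_, fun h => by simpa using congrFun h 0, ?_⟩
  · simpa [Fin.cons_injective_iff] using hpq
  · have hqp : K q p = K p p := by rw [hrow]
    have hqq : K q q = K p q := by rw [hrow]
    simp only [Fin.sum_univ_two, Matrix.cons_val_zero, Matrix.cons_val_one, hqp, hqq, map_one,
      map_neg]
    ring

theorem Real.exists_ne_zero_periodic_cos_const_mul (lam : ℝ) :
    ∃ T ≠ 0, Function.Periodic (fun u => Real.cos (lam * u)) T := by
  rcases eq_or_ne lam 0 with rfl | hlam
  · exact ⟨1, one_ne_zero, fun u => by simp⟩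
  · exact ⟨lam⁻¹ * (2 * Real.pi), by positivity, Real.cos_periodic.const_mul lam⟩

theorem EllTwo.sphere_nonempty : (Metric.sphere (0 : EllTwo) 1).Nonempty :=
  ⟨lp.single 2 0 (1 : ℝ), by simp [lp.norm_single]⟩

theorem not_spd_on_time_cross_sphere_general
    (f : ℝ → ℝ)
    (lam : ℝ) :
    ∃ (n : ℕ) (x : Fin n → ℝ × Metric.sphere (0 : EllTwo) 1) (c : Fin n → ℂ),
      Function.Injective x ∧ c ≠ 0 ∧
        (∑ i, ∑ j, c i * conj (c j) *
          ((f (⟪((x i).2 : EllTwo), ((x j).2 : EllTwo)⟫ *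
            Real.cos (lam * ((x i).1 - (x j).1))) : ℝ) : ℂ)) = 0 := by
  obtain ⟨T, hT, hper⟩ := Real.exists_ne_zero_periodic_cos_const_mul lam
  obtain ⟨y, hy⟩ := EllTwo.sphere_nonempty
  have hne : ((0 : ℝ), (⟨y, hy⟩ : Metric.sphere (0 : EllTwo) 1)) ≠ (T, ⟨y, hy⟩) := by
    simp [Prod.ext_iff, hT.symm]
  set K : ℝ × Metric.sphere (0 : EllTwo) 1 → ℝ × Metric.sphere (0 : EllTwo) 1 → ℂ :=
    fun p q => (f (⟪(p.2 : EllTwo), (q.2 : EllTwo)⟫ * Real.cos (lam * (p.1 - q.1))) : ℂ)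
    with hK
  have hrow : K (0, ⟨y, hy⟩) = K (T, ⟨y, hy⟩) := by
    funext q
    have hcos : Real.cos (lam * (0 - q.1)) = Real.cos (lam * (T - q.1)) := by
      simpa [neg_add_eq_sub] using (hper (-q.1)).symm
    simp only [hK, hcos]
  exact exists_quadratic_form_eq_zero_of_kernel_row_eq K hne hrow

theorem not_spd_on_time_cross_sphere
    (a : ℕ → ℝ) (ha : ∀ k, 0 ≤ a k) (hsa : Summable a)
    (f : ℝ → ℝ)
    (hf : ∀ t ∈ Set.Icc (-1 : ℝ) 1, f t = ∑' k : ℕ, a k * t ^ k)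
    (lam : ℝ) :
    ∃ (n : ℕ) (x : Fin n → ℝ × Metric.sphere (0 : EllTwo) 1) (c : Fin n → ℂ),
      Function.Injective x ∧ c ≠ 0 ∧
        (∑ i, ∑ j, c i * conj (c j) *
          ((f (⟪((x i).2 : EllTwo), ((x j).2 : EllTwo)⟫ *
            Real.cos (lam * ((x i).1 - (x j).1))) : ℝ) : ℂ)) = 0 :=
  not_spd_on_time_cross_sphere_general f lam
end
end

section
/- Let a, b : ℕ → ℝ be sequences with a_k ≥ 0 and b_l ≥ 0 for all k, l, with Σ_{k=0}^∞ a_k < ∞ and Σ_{l=0}^∞ b_l < ∞, and assume that {k : a_k > 0} contains infinitely many even and infinitely many odd integers, and likewise {l : b_l > 0} contains infinitely many even and infinitely many odd integers. Define f(t) = Σ_{k=0}^∞ a_k t^k and g(t) = Σ_{l=0}^∞ b_l t^l for t ∈ [-1,1]. Let λ, θ be nonzero real numbers with λ/θ irrational. Then the kernel ((u,x),(v,y)) ∈ (ℝ × S^∞)² ↦ f(⟨x,y⟩ · cos(λ(u−v))) · g(⟨x,y⟩ · cos(θ(u−v))) is strictly positive definite on ℝ × S^∞ (with complex scalars). -/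
open scoped BigOperators RealInnerProductSpace ComplexConjugate

noncomputable section

/-- A complex kernel `K` on `X` is positive definite: every quadratic form
`∑ᵢⱼ cᵢ conj(cⱼ) K(xᵢ, xⱼ)` is a nonnegative real number. -/
def IsPosDefKernelC {X : Type*} (K : X → X → ℂ) : Prop :=
  ∀ (n : ℕ) (x : Fin n → X) (c : Fin n → ℂ),
    0 ≤ (∑ i, ∑ j, c i * conj (c j) * K (x i) (x j)).re ∧
      (∑ i, ∑ j, c i * conj (c j) * K (x i) (x j)).im = 0

/-- A complex kernel `K` on `X` is strictly positive definite. -/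
def IsStrictPosDefKernelC {X : Type*} (K : X → X → ℂ) : Prop :=
  IsPosDefKernelC K ∧
    ∀ (n : ℕ) (x : Fin n → X) (c : Fin n → ℂ),
      Function.Injective x → c ≠ 0 →
        0 < (∑ i, ∑ j, c i * conj (c j) * K (x i) (x j)).re

/-!
Expanding `f` and `g` in their power series and each `(2 cos)^k` binomially writes the kernel as a
nonnegative combination of the kernels `⟪x, y⟫^m e^{iξ(u - v)}`, each positive semidefinite by the
Schur product theorem. If the quadratic form vanishes at `c`, so does each of these forms, which
forces `∑ⱼ conj cⱼ ⟪y_{i₀}, y_j⟫^m e^{i(pλ+qθ)u_j} = 0` for all `p, q ∈ ℕ` and infinitely many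
`m ≡ p + q (mod 2)`; this is where both parities are needed. As `m → ∞` only the points with
`y_j = ±y_{i₀}` survive, leaving a vanishing combination of the characters
`(p, q) ↦ (±e^{iλu_j})^p (±e^{iθu_j})^q`. These are pairwise distinct because `λ/θ` is irrational,
so Dedekind's independence of characters gives `c_{i₀} = 0`.
-/

open scoped ComplexOrder
open Complex Matrix Filter Topology

theorem Matrix.PosSemidef.map_ofReal {ι : Type*} [Fintype ι] {A : Matrix ι ι ℝ}
    (hA : A.PosSemidef) : (A.map ((↑) : ℝ → ℂ)).PosSemidef := by
  classical
  open MatrixOrder in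
  obtain ⟨B, rfl⟩ := CStarAlgebra.nonneg_iff_eq_star_mul_self.mp hA.nonneg
  have hB : (star B * B).map ((↑) : ℝ → ℂ) = (B.map (↑))ᴴ * B.map (↑) := by
    ext i j
    simp [Matrix.mul_apply, Matrix.conjTranspose_apply]
  rw [hB]
  exact posSemidef_conjTranspose_mul_self _

section QuadForm

variable {ι : Type*} [Fintype ι]

def quadForm (c : ι → ℂ) : Matrix ι ι ℂ →ₗ[ℂ] ℂ where
  toFun M := ∑ i, ∑ j, c i * conj (c j) * M i j
  map_add' M N := by simp only [Matrix.add_apply, mul_add, Finset.sum_add_distrib]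
  map_smul' z M := by
    simp only [Matrix.smul_apply, smul_eq_mul, Finset.mul_sum, RingHom.id_apply]
    exact Finset.sum_congr rfl fun i _ => Finset.sum_congr rfl fun j _ => by ring

theorem quadForm_eq_dotProduct (c : ι → ℂ) (M : Matrix ι ι ℂ) :
    quadForm c M = star (star c) ⬝ᵥ M *ᵥ star c := by
  simp only [quadForm, LinearMap.coe_mk, AddHom.coe_mk, dotProduct, mulVec, Finset.mul_sum,
    Pi.star_apply, Complex.conj_conj, RCLike.star_def]
  exact Finset.sum_congr rfl fun i _ => Finset.sum_congr rfl fun j _ => by ring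

theorem Matrix.PosSemidef.quadForm_nonneg {M : Matrix ι ι ℂ} (hM : M.PosSemidef) (c : ι → ℂ) :
    0 ≤ quadForm c M := by
  rw [quadForm_eq_dotProduct]
  exact hM.dotProduct_mulVec_nonneg _

theorem Matrix.PosSemidef.mulVec_star_eq_zero {M : Matrix ι ι ℂ} (hM : M.PosSemidef)
    {c : ι → ℂ} (hc : quadForm c M = 0) : M *ᵥ star c = 0 :=
  (hM.dotProduct_mulVec_zero_iff _).mp (by rwa [← quadForm_eq_dotProduct])

end QuadForm

theorem isStrictPosDefKernelC_of_quadForm {X : Type*} {K : X → X → ℂ}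
    (hpos : ∀ n (x : Fin n → X) c, 0 ≤ quadForm c (of fun i j => K (x i) (x j)))
    (hstrict : ∀ n (x : Fin n → X) c, Function.Injective x →
      quadForm c (of fun i j => K (x i) (x j)) = 0 → c = 0) :
    IsStrictPosDefKernelC K := by
  refine ⟨fun n x c => ?_, fun n x c hx hc => ?_⟩
  · obtain ⟨hre, him⟩ := Complex.nonneg_iff.mp (hpos n x c)
    exact ⟨hre, him.symm⟩
  · have hne : quadForm c (of fun i j => K (x i) (x j)) ≠ 0 := fun h => hc (hstrict n x c hx h)
    exact (Complex.pos_iff.mp ((hpos n x c).lt_of_ne hne.symm)).1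

theorem ofReal_two_mul_cos_pow (x : ℝ) (k : ℕ) :
    ((2 * Real.cos x : ℝ) : ℂ) ^ k =
      ∑ j ∈ Finset.range (k + 1), (k.choose j : ℂ) * exp ((((2 * j - k : ℤ) : ℝ) * x : ℝ) * I) := by
  have h2cos : ((2 * Real.cos x : ℝ) : ℂ) = exp (x * I) + exp (-x * I) := by
    rw [exp_mul_I, exp_mul_I, cos_neg, sin_neg]
    push_cast
    ring
  rw [h2cos, add_pow]
  refine Finset.sum_congr rfl fun j hj => ?_
  have hjk : j ≤ k := Nat.lt_succ_iff.mp (Finset.mem_range.mp hj)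
  rw [← exp_nat_mul, ← exp_nat_mul, ← exp_add, mul_comm]
  congr 2
  push_cast [hjk]
  ring

theorem ofReal_mul_cos_pow_mul_mul_cos_pow (G α β : ℝ) (k l : ℕ) :
    (((G * Real.cos α) ^ k * (G * Real.cos β) ^ l : ℝ) : ℂ) =
      ∑ j ∈ Finset.range (k + 1), ∑ r ∈ Finset.range (l + 1),
        ((k.choose j * l.choose r / 2 ^ (k + l) : ℝ) : ℂ) *
          ((G : ℂ) ^ (k + l) * exp ((((2 * j - k : ℤ) : ℝ) * α + ((2 * r - l : ℤ) : ℝ) * β : ℝ) * I)) := by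
  have hsplit : (((G * Real.cos α) ^ k * (G * Real.cos β) ^ l : ℝ) : ℂ) = (G : ℂ) ^ (k + l) /
      2 ^ (k + l) * (((2 * Real.cos α : ℝ) : ℂ) ^ k * ((2 * Real.cos β : ℝ) : ℂ) ^ l) := by
    push_cast
    field_simp
    ring
  rw [hsplit, ofReal_two_mul_cos_pow, ofReal_two_mul_cos_pow, Finset.sum_mul_sum, Finset.mul_sum]
  refine Finset.sum_congr rfl fun j _ => ?_
  rw [Finset.mul_sum]
  refine Finset.sum_congr rfl fun r _ => ?_
  push_cast
  rw [add_mul, exp_add]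
  ring

theorem summable_norm_mul_pow {a : ℕ → ℝ} (ha : ∀ k, 0 ≤ a k) (hsa : Summable a) {t : ℝ}
    (ht : |t| ≤ 1) : Summable fun k => ‖a k * t ^ k‖ := by
  refine hsa.of_nonneg_of_le (fun k => norm_nonneg _) fun k => ?_
  rw [norm_mul, norm_pow, Real.norm_eq_abs, Real.norm_eq_abs, abs_of_nonneg (ha k)]
  exact mul_le_of_le_one_right (ha k) (pow_le_one₀ (abs_nonneg t) ht)

theorem hasSum_mul_mul_pow_mul_pow {a b : ℕ → ℝ} (ha : ∀ k, 0 ≤ a k) (hb : ∀ l, 0 ≤ b l)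
    (hsa : Summable a) (hsb : Summable b) {s t : ℝ} (hs : |s| ≤ 1) (ht : |t| ≤ 1) :
    HasSum (fun kl : ℕ × ℕ => a kl.1 * b kl.2 * (s ^ kl.1 * t ^ kl.2))
      ((∑' k, a k * s ^ k) * ∑' l, b l * t ^ l) := by
  have hsa' := summable_norm_mul_pow ha hsa hs
  have hsb' := summable_norm_mul_pow hb hsb ht
  refine (hsa'.of_norm.hasSum.mul hsb'.of_norm.hasSum
    (summable_mul_of_summable_norm hsa' hsb')).congr_fun fun kl => ?_
  ring

theorem abs_inner_mul_cos_le_one {E : Type*} [NormedAddCommGroup E] [InnerProductSpace ℝ E]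
    {x y : E} (hx : ‖x‖ ≤ 1) (hy : ‖y‖ ≤ 1) (α : ℝ) : |⟪x, y⟫ * Real.cos α| ≤ 1 := by
  rw [abs_mul]
  refine mul_le_one₀ ((abs_real_inner_le_norm x y).trans ?_) (abs_nonneg _) (Real.abs_cos_le_one α)
  exact mul_le_one₀ hx (norm_nonneg y) hy

theorem sum_filter_eq_zero_of_frequently_sum_mul_pow_eq_zero {ι : Type*} [Fintype ι]
    (t : ι → ℂ) {ρ : ι → ℝ} (hρ0 : ∀ j, 0 ≤ ρ j) (hρ1 : ∀ j, ρ j ≤ 1)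
    (h : ∃ᶠ n in atTop, ∑ j, t j * (ρ j : ℂ) ^ n = 0) :
    ∑ j ∈ Finset.univ.filter (fun j => ρ j = 1), t j = 0 := by
  have hlim : Tendsto (fun n => ∑ j, t j * (ρ j : ℂ) ^ n) atTop
      (𝓝 (∑ j, if ρ j = 1 then t j else 0)) := by
    refine tendsto_finsetSum _ fun j _ => ?_
    split_ifs with hj
    · simp [hj]
    · have hρ : ‖(ρ j : ℂ)‖ < 1 := by
        rw [norm_real, Real.norm_of_nonneg (hρ0 j)]
        exact (hρ1 j).lt_of_ne hj
      simpa using (tendsto_pow_atTop_nhds_zero_of_norm_lt_one hρ).const_mul (t j)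
  rw [Finset.sum_filter]
  exact tendsto_nhds_unique_of_frequently_eq hlim tendsto_const_nhds h

theorem eq_zero_of_forall_sum_mul_pow_mul_pow_eq_zero {ι : Type*} {s : Finset ι}
    {α β w : ι → ℂ} (hinj : Set.InjOn (fun j => (α j, β j)) s)
    (h : ∀ p q : ℕ, ∑ j ∈ s, w j * α j ^ p * β j ^ q = 0) : ∀ j ∈ s, w j = 0 := by
  let χ : s → Multiplicative ℕ × Multiplicative ℕ →* ℂ := fun j =>
    (powersHom ℂ (α j)).coprod (powersHom ℂ (β j))
  have hχ : ∀ j p q, χ j (Multiplicative.ofAdd p, Multiplicative.ofAdd q) = α j ^ p * β j ^ q :=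
    fun _ _ _ => rfl
  have hχinj : Function.Injective χ := fun j j' hjj' => Subtype.ext <| hinj j.2 j'.2 <| by
    have h1 := congrArg (· (Multiplicative.ofAdd 1, Multiplicative.ofAdd 0)) hjj'
    have h2 := congrArg (· (Multiplicative.ofAdd 0, Multiplicative.ofAdd 1)) hjj'
    simp only [hχ, pow_one, pow_zero, mul_one, one_mul] at h1 h2
    exact Prod.ext h1 h2
  have hli := Fintype.linearIndependent_iff.mp
    ((linearIndependent_monoidHom _ ℂ).comp χ hχinj) (fun j => w j) <| by
      funext x
      simp only [Finset.sum_apply, Function.comp_apply, Pi.smul_apply, smul_eq_mul, χ,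
        MonoidHom.coprod_apply, powersHom_apply, ← mul_assoc, Pi.zero_apply]
      exact (Finset.sum_attach s fun j => w j * α j ^ (Multiplicative.toAdd x.1) *
        β j ^ (Multiplicative.toAdd x.2)).trans (h _ _)
  exact fun j hj => hli ⟨j, hj⟩

theorem eq_of_exp_mul_I_eq_of_irrational {lam θ : ℝ} (hirr : Irrational (lam / θ)) {s t : ℝ}
    (h1 : exp (lam * s * I) = exp (lam * t * I)) (h2 : exp (θ * s * I) = exp (θ * t * I)) :
    s = t := by
  have hperiod : ∀ x : ℝ, exp (x * s * I) = exp (x * t * I) →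
      ∃ m : ℤ, x * (s - t) = m * (2 * Real.pi) := by
    intro x hx
    obtain ⟨m, hm⟩ := exp_eq_exp_iff_exists_int.mp hx
    refine ⟨m, ofReal_injective (mul_right_cancel₀ I_ne_zero ?_)⟩
    push_cast
    linear_combination hm
  obtain ⟨m, hm⟩ := hperiod lam h1
  obtain ⟨n, hn⟩ := hperiod θ h2
  by_contra hst
  refine hirr ⟨m / n, ?_⟩
  rw [← mul_div_mul_right lam θ (sub_ne_zero.mpr hst), hm, hn,
    mul_div_mul_right _ _ (by positivity : (2 * Real.pi) ≠ 0)]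
  push_cast
  rfl

theorem eq_inner_smul_of_inner_sq_eq_one {E : Type*} [NormedAddCommGroup E]
    [InnerProductSpace ℝ E] {x y : E} (hx : ‖x‖ = 1) (hy : ‖y‖ = 1) (h : ⟪x, y⟫ ^ 2 = 1) :
    y = ⟪x, y⟫ • x := by
  have hsq : ‖y - ⟪x, y⟫ • x‖ ^ 2 = 0 := by
    rw [norm_sub_sq_real, inner_smul_right, real_inner_comm x y, norm_smul, Real.norm_eq_abs,
      mul_pow, sq_abs, hx, hy]
    linear_combination -h
  exact sub_eq_zero.mp (norm_eq_zero.mp (pow_eq_zero_iff two_ne_zero |>.mp hsq))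

theorem exists_ge_add_two_mul_mem {S : Set ℕ} (he : (S ∩ {n | Even n}).Infinite)
    (ho : (S ∩ {n | Odd n}).Infinite) (p N : ℕ) : ∃ k ≥ N, p + 2 * k ∈ S := by
  have hpar : ∃ m ∈ S, p + 2 * N < m ∧ Even (m + p) := by
    rcases Nat.even_or_odd p with hp | hp
    · obtain ⟨m, ⟨hmS, hm⟩, hlt⟩ := he.exists_gt (p + 2 * N)
      exact ⟨m, hmS, hlt, Even.add hm hp⟩
    · obtain ⟨m, ⟨hmS, hm⟩, hlt⟩ := ho.exists_gt (p + 2 * N)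
      exact ⟨m, hmS, hlt, Odd.add_odd hm hp⟩
  obtain ⟨m, hmS, hlt, r, hr⟩ := hpar
  exact ⟨(m - p) / 2, by omega, by convert hmS using 1; omega⟩

theorem injOn_inner_mul_exp_of_irrational {E : Type*} [NormedAddCommGroup E]
    [InnerProductSpace ℝ E] {ι : Type*} {u : ι → ℝ} {y : ι → E} (hy : ∀ i, ‖y i‖ = 1)
    (hinj : Function.Injective fun i => (u i, y i)) {lam θ : ℝ} (hirr : Irrational (lam / θ))
    (i₀ : ι) :
    Set.InjOn (fun j => ((⟪y i₀, y j⟫ : ℂ) * exp (lam * u j * I),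
      (⟪y i₀, y j⟫ : ℂ) * exp (θ * u j * I))) {j | ⟪y i₀, y j⟫ ^ 2 = 1} := by
  have hsq : ∀ (x : ℝ) (j : ι), ⟪y i₀, y j⟫ ^ 2 = 1 →
      ((⟪y i₀, y j⟫ : ℂ) * exp (x * u j * I)) ^ 2 = exp (x * (2 * u j : ℝ) * I) := by
    intro x j hj
    rw [mul_pow, ← ofReal_pow, hj, ← exp_nat_mul]
    push_cast
    ring_nf
  intro j hj j' hj' hjj'
  obtain ⟨hα, hβ⟩ := Prod.ext_iff.mp hjj'
  have hu : u j = u j' := by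
    have := eq_of_exp_mul_I_eq_of_irrational hirr (s := 2 * u j) (t := 2 * u j')
      (by rw [← hsq lam j hj, ← hsq lam j' hj']; exact congrArg (· ^ 2) hα)
      (by rw [← hsq θ j hj, ← hsq θ j' hj']; exact congrArg (· ^ 2) hβ)
    linarith
  have hG : ⟪y i₀, y j⟫ = ⟪y i₀, y j'⟫ := by
    have hα' : (⟪y i₀, y j⟫ : ℂ) * exp (lam * u j * I) = ⟪y i₀, y j'⟫ * exp (lam * u j' * I) := hα
    rw [hu] at hα'
    exact_mod_cast mul_right_cancel₀ (exp_ne_zero _) hα'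
  refine hinj (Prod.ext hu ?_)
  change y j = y j'
  rw [eq_inner_smul_of_inner_sq_eq_one (hy i₀) (hy j) hj,
    eq_inner_smul_of_inner_sq_eq_one (hy i₀) (hy j') hj', hG]

section Kernels

variable {E : Type*} [NormedAddCommGroup E] [InnerProductSpace ℝ E] {ι : Type*}
  (u : ι → ℝ) (y : ι → E)

def innerPowExpMatrix (m : ℕ) (ξ : ℝ) : Matrix ι ι ℂ :=
  of fun i j => (⟪y i, y j⟫ : ℂ) ^ m * exp (ξ * (u i - u j) * I)

def cosMonomialMatrix (lam θ : ℝ) (k l : ℕ) : Matrix ι ι ℂ :=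
  of fun i j => (((⟪y i, y j⟫ * Real.cos (lam * (u i - u j))) ^ k *
    (⟪y i, y j⟫ * Real.cos (θ * (u i - u j))) ^ l : ℝ) : ℂ)

def productKernelMatrix (f g : ℝ → ℝ) (lam θ : ℝ) : Matrix ι ι ℂ :=
  of fun i j => ((f (⟪y i, y j⟫ * Real.cos (lam * (u i - u j))) *
    g (⟪y i, y j⟫ * Real.cos (θ * (u i - u j))) : ℝ) : ℂ)

theorem cosMonomialMatrix_eq_sum (lam θ : ℝ) (k l : ℕ) :
    cosMonomialMatrix u y lam θ k l = ∑ j ∈ Finset.range (k + 1), ∑ r ∈ Finset.range (l + 1),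
      ((k.choose j * l.choose r / 2 ^ (k + l) : ℝ) : ℂ) •
        innerPowExpMatrix u y (k + l) (((2 * j - k : ℤ) : ℝ) * lam + ((2 * r - l : ℤ) : ℝ) * θ) := by
  ext i i'
  simp only [cosMonomialMatrix, innerPowExpMatrix, of_apply, ofReal_mul_cos_pow_mul_mul_cos_pow,
    Matrix.sum_apply, Matrix.smul_apply, smul_eq_mul]
  refine Finset.sum_congr rfl fun j _ => Finset.sum_congr rfl fun r _ => ?_
  congr 4
  push_cast
  ring

variable [Fintype ι]

theorem posSemidef_innerPowExpMatrix (m : ℕ) (ξ : ℝ) :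
    (innerPowExpMatrix u y m ξ).PosSemidef := by
  have hG : (of fun i j => (⟪y i, y j⟫ : ℂ)).PosSemidef :=
    (posSemidef_gram ℝ y).map_ofReal
  have hpow : ∀ m : ℕ, (of fun i j => (⟪y i, y j⟫ : ℂ) ^ m).PosSemidef := by
    intro m
    induction m with
    | zero => simpa [vecMulVec] using posSemidef_vecMulVec_self_star (1 : ι → ℂ)
    | succ m ih => simpa [hadamard, pow_succ] using ih.hadamard hG
  have hexp := posSemidef_vecMulVec_self_star fun i => exp (ξ * u i * I)
  have hprod : innerPowExpMatrix u y m ξ = (of fun i j => (⟪y i, y j⟫ : ℂ) ^ m) ⊙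
      vecMulVec (fun i => exp (ξ * u i * I)) (star fun i => exp (ξ * u i * I)) := by
    ext i j
    simp only [innerPowExpMatrix, hadamard_apply, of_apply, vecMulVec_apply, Pi.star_apply,
      RCLike.star_def, ← exp_conj, ← exp_add, map_mul, conj_ofReal, conj_I]
    ring_nf
  rw [hprod]
  exact (hpow m).hadamard hexp

theorem quadForm_cosMonomialMatrix (c : ι → ℂ) (lam θ : ℝ) (k l : ℕ) :
    quadForm c (cosMonomialMatrix u y lam θ k l) =
      ∑ j ∈ Finset.range (k + 1), ∑ r ∈ Finset.range (l + 1),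
        ((k.choose j * l.choose r / 2 ^ (k + l) : ℝ) : ℂ) *
          quadForm c (innerPowExpMatrix u y (k + l)
            (((2 * j - k : ℤ) : ℝ) * lam + ((2 * r - l : ℤ) : ℝ) * θ)) := by
  simp only [cosMonomialMatrix_eq_sum, map_sum, map_smul, smul_eq_mul]

theorem quadForm_cosMonomialMatrix_nonneg (c : ι → ℂ) (lam θ : ℝ) (k l : ℕ) :
    0 ≤ quadForm c (cosMonomialMatrix u y lam θ k l) := by
  rw [quadForm_cosMonomialMatrix]
  refine Finset.sum_nonneg fun j _ => Finset.sum_nonneg fun r _ => mul_nonneg ?_ ?_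
  · exact zero_le_real.mpr (by positivity)
  · exact (posSemidef_innerPowExpMatrix u y _ _).quadForm_nonneg c

theorem quadForm_innerPowExpMatrix_eq_zero {c : ι → ℂ} {lam θ : ℝ} {k l : ℕ}
    (h : quadForm c (cosMonomialMatrix u y lam θ k l) = 0) {j r : ℕ} (hj : j ≤ k) (hr : r ≤ l) :
    quadForm c (innerPowExpMatrix u y (k + l)
      (((2 * j - k : ℤ) : ℝ) * lam + ((2 * r - l : ℤ) : ℝ) * θ)) = 0 := by
  have hterm_nonneg : ∀ j r, 0 ≤ ((k.choose j * l.choose r / 2 ^ (k + l) : ℝ) : ℂ) *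
      quadForm c (innerPowExpMatrix u y (k + l)
        (((2 * j - k : ℤ) : ℝ) * lam + ((2 * r - l : ℤ) : ℝ) * θ)) := fun j r =>
    mul_nonneg (zero_le_real.mpr (by positivity))
      ((posSemidef_innerPowExpMatrix u y _ _).quadForm_nonneg c)
  rw [quadForm_cosMonomialMatrix, Finset.sum_eq_zero_iff_of_nonneg fun j _ =>
    Finset.sum_nonneg fun r _ => hterm_nonneg j r] at h
  have hjr := (Finset.sum_eq_zero_iff_of_nonneg fun r _ => hterm_nonneg j r).mp
    (h j (Finset.mem_range_succ_iff.mpr hj)) r (Finset.mem_range_succ_iff.mpr hr)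
  refine (mul_eq_zero.mp hjr).resolve_left (ofReal_ne_zero.mpr ?_)
  have := Nat.choose_pos hj
  have := Nat.choose_pos hr
  positivity

theorem sum_conj_mul_inner_pow_mul_exp_eq_zero {c : ι → ℂ} {m : ℕ} {ξ : ℝ}
    (h : quadForm c (innerPowExpMatrix u y m ξ) = 0) (i : ι) :
    ∑ j, conj (c j) * (⟪y i, y j⟫ : ℂ) ^ m * exp (-ξ * u j * I) = 0 := by
  have hrow := congrFun ((posSemidef_innerPowExpMatrix u y m ξ).mulVec_star_eq_zero h) i
  simp only [mulVec, dotProduct, innerPowExpMatrix, of_apply, Pi.star_apply, RCLike.star_def,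
    Pi.zero_apply] at hrow
  have hfactor : ∑ j, (⟪y i, y j⟫ : ℂ) ^ m * exp (ξ * (u i - u j) * I) * conj (c j) =
      exp (ξ * u i * I) * ∑ j, conj (c j) * (⟪y i, y j⟫ : ℂ) ^ m * exp (-ξ * u j * I) := by
    rw [Finset.mul_sum]
    refine Finset.sum_congr rfl fun j _ => ?_
    rw [show (ξ : ℂ) * (u i - u j) * I = ξ * u i * I + -ξ * u j * I by ring, exp_add]
    ring
  exact (mul_eq_zero.mp (hfactor ▸ hrow)).resolve_left (exp_ne_zero _)

variable {u y} {a b : ℕ → ℝ} {f g : ℝ → ℝ}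

theorem hasSum_quadForm_productKernelMatrix (hy : ∀ i, ‖y i‖ ≤ 1)
    (ha : ∀ k, 0 ≤ a k) (hb : ∀ l, 0 ≤ b l) (hsa : Summable a) (hsb : Summable b)
    (hf : ∀ t ∈ Set.Icc (-1 : ℝ) 1, f t = ∑' k : ℕ, a k * t ^ k)
    (hg : ∀ t ∈ Set.Icc (-1 : ℝ) 1, g t = ∑' l : ℕ, b l * t ^ l) (lam θ : ℝ) (c : ι → ℂ) :
    HasSum (fun kl : ℕ × ℕ => ((a kl.1 * b kl.2 : ℝ) : ℂ) *
        quadForm c (cosMonomialMatrix u y lam θ kl.1 kl.2))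
      (quadForm c (productKernelMatrix u y f g lam θ)) := by
  have hK : HasSum (fun kl : ℕ × ℕ => ((a kl.1 * b kl.2 : ℝ) : ℂ) •
      cosMonomialMatrix u y lam θ kl.1 kl.2) (productKernelMatrix u y f g lam θ) := by
    refine Pi.hasSum.mpr fun i => Pi.hasSum.mpr fun j => ?_
    have h1 := abs_inner_mul_cos_le_one (hy i) (hy j) (lam * (u i - u j))
    have h2 := abs_inner_mul_cos_le_one (hy i) (hy j) (θ * (u i - u j))
    simp only [Matrix.smul_apply, cosMonomialMatrix, productKernelMatrix, Matrix.of_apply,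
      smul_eq_mul, ← ofReal_mul]
    rw [hasSum_ofReal, hf _ (abs_le.mp h1), hg _ (abs_le.mp h2)]
    exact hasSum_mul_mul_pow_mul_pow ha hb hsa hsb h1 h2
  simpa only [Function.comp_def, map_smul, smul_eq_mul] using
    hK.map (quadForm c) (quadForm c).continuous_of_finiteDimensional

theorem quadForm_productKernelMatrix_nonneg (hy : ∀ i, ‖y i‖ ≤ 1)
    (ha : ∀ k, 0 ≤ a k) (hb : ∀ l, 0 ≤ b l) (hsa : Summable a) (hsb : Summable b)
    (hf : ∀ t ∈ Set.Icc (-1 : ℝ) 1, f t = ∑' k : ℕ, a k * t ^ k)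
    (hg : ∀ t ∈ Set.Icc (-1 : ℝ) 1, g t = ∑' l : ℕ, b l * t ^ l) (lam θ : ℝ) (c : ι → ℂ) :
    0 ≤ quadForm c (productKernelMatrix u y f g lam θ) :=
  (hasSum_quadForm_productKernelMatrix hy ha hb hsa hsb hf hg lam θ c).nonneg fun _ =>
    mul_nonneg (zero_le_real.mpr (mul_nonneg (ha _) (hb _)))
      (quadForm_cosMonomialMatrix_nonneg u y c lam θ _ _)

theorem sum_conj_mul_inner_pow_mul_exp_eq_zero_of_quadForm_productKernelMatrix_eq_zero
    (hy : ∀ i, ‖y i‖ ≤ 1)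
    (ha : ∀ k, 0 ≤ a k) (hb : ∀ l, 0 ≤ b l) (hsa : Summable a) (hsb : Summable b)
    (hf : ∀ t ∈ Set.Icc (-1 : ℝ) 1, f t = ∑' k : ℕ, a k * t ^ k)
    (hg : ∀ t ∈ Set.Icc (-1 : ℝ) 1, g t = ∑' l : ℕ, b l * t ^ l) {lam θ : ℝ} {c : ι → ℂ}
    (h : quadForm c (productKernelMatrix u y f g lam θ) = 0) {p q k l : ℕ}
    (hak : 0 < a (p + 2 * k)) (hbl : 0 < b (q + 2 * l)) (i : ι) :
    ∑ j, conj (c j) * (⟪y i, y j⟫ : ℂ) ^ (p + q + 2 * (k + l)) *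
      exp ((p * lam + q * θ) * u j * I) = 0 := by
  have hterms := (hasSum_zero_iff_of_nonneg fun kl : ℕ × ℕ =>
    mul_nonneg (zero_le_real.mpr (mul_nonneg (ha kl.1) (hb kl.2)))
      (quadForm_cosMonomialMatrix_nonneg u y c lam θ _ _)).mp
    (h ▸ hasSum_quadForm_productKernelMatrix hy ha hb hsa hsb hf hg lam θ c)
  have hmono : quadForm c (cosMonomialMatrix u y lam θ (p + 2 * k) (q + 2 * l)) = 0 :=
    (mul_eq_zero.mp (congrFun hterms (p + 2 * k, q + 2 * l))).resolve_left
      (ofReal_ne_zero.mpr (mul_pos hak hbl).ne')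
  -- the frequency `(2k - (p + 2k)) λ + (2l - (q + 2l)) θ` is `-(pλ + qθ)`
  have hrow := sum_conj_mul_inner_pow_mul_exp_eq_zero u y
    (quadForm_innerPowExpMatrix_eq_zero u y hmono (j := k) (r := l) (by omega) (by omega)) i
  convert hrow using 4 with j
  · ring
  · push_cast
    ring

theorem eq_zero_of_quadForm_productKernelMatrix_eq_zero (hy : ∀ i, ‖y i‖ = 1)
    (hinj : Function.Injective fun i => (u i, y i))
    (ha : ∀ k, 0 ≤ a k) (hb : ∀ l, 0 ≤ b l) (hsa : Summable a) (hsb : Summable b)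
    (hae : ({k : ℕ | 0 < a k} ∩ {n : ℕ | Even n}).Infinite)
    (hao : ({k : ℕ | 0 < a k} ∩ {n : ℕ | Odd n}).Infinite)
    (hbe : ({l : ℕ | 0 < b l} ∩ {n : ℕ | Even n}).Infinite)
    (hbo : ({l : ℕ | 0 < b l} ∩ {n : ℕ | Odd n}).Infinite)
    (hf : ∀ t ∈ Set.Icc (-1 : ℝ) 1, f t = ∑' k : ℕ, a k * t ^ k)
    (hg : ∀ t ∈ Set.Icc (-1 : ℝ) 1, g t = ∑' l : ℕ, b l * t ^ l) {lam θ : ℝ}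
    (hirr : Irrational (lam / θ)) {c : ι → ℂ}
    (h : quadForm c (productKernelMatrix u y f g lam θ) = 0) : c = 0 := by
  funext i₀
  set G : ι → ℝ := fun j => ⟪y i₀, y j⟫
  have hG : ∀ j, |G j| ≤ 1 := fun j => by
    simpa [hy] using abs_real_inner_le_norm (y i₀) (y j)
  have hlimit : ∀ p q : ℕ, ∑ j ∈ Finset.univ.filter fun j => G j ^ 2 = 1,
      conj (c j) * (G j * exp (lam * u j * I)) ^ p * (G j * exp (θ * u j * I)) ^ q = 0 := by
    intro p q
    obtain ⟨l, -, hl⟩ := exists_ge_add_two_mul_mem hbe hbo q 0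
    have hfreq : ∃ᶠ n in atTop, ∑ j, conj (c j) * (G j : ℂ) ^ (p + q) *
        exp ((p * lam + q * θ) * u j * I) * ((G j ^ 2 : ℝ) : ℂ) ^ n = 0 := by
      refine frequently_atTop.mpr fun N => ?_
      obtain ⟨k, hkN, hk⟩ := exists_ge_add_two_mul_mem hae hao p N
      refine ⟨k + l, by omega, ?_⟩
      rw [← sum_conj_mul_inner_pow_mul_exp_eq_zero_of_quadForm_productKernelMatrix_eq_zero
        (fun i => (hy i).le) ha hb hsa hsb hf hg h hk hl i₀]
      refine Finset.sum_congr rfl fun j _ => ?_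
      push_cast
      ring
    convert sum_filter_eq_zero_of_frequently_sum_mul_pow_eq_zero _ (fun j => sq_nonneg (G j))
      (fun j => (sq_le_one_iff_abs_le_one _).mpr (hG j)) hfreq using 2 with j
    simp only [mul_pow, ← exp_nat_mul]
    rw [show ((p : ℂ) * lam + q * θ) * u j * I = p * (lam * u j * I) + q * (θ * u j * I) by ring,
      exp_add]
    ring
  have hi₀ : i₀ ∈ Finset.univ.filter fun j => G j ^ 2 = 1 := by simp [G, hy]
  simpa using eq_zero_of_forall_sum_mul_pow_mul_pow_eq_zero
    (by simpa using injOn_inner_mul_exp_of_irrational hy hinj hirr i₀) hlimit i₀ hi₀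

end Kernels

theorem product_spd_on_time_cross_sphere_general
    (a b : ℕ → ℝ) (ha : ∀ k, 0 ≤ a k) (hb : ∀ l, 0 ≤ b l)
    (hsa : Summable a) (hsb : Summable b)
    (hae : ({k : ℕ | 0 < a k} ∩ {n : ℕ | Even n}).Infinite)
    (hao : ({k : ℕ | 0 < a k} ∩ {n : ℕ | Odd n}).Infinite)
    (hbe : ({l : ℕ | 0 < b l} ∩ {n : ℕ | Even n}).Infinite)
    (hbo : ({l : ℕ | 0 < b l} ∩ {n : ℕ | Odd n}).Infinite)
    (f g : ℝ → ℝ)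
    (hf : ∀ t ∈ Set.Icc (-1 : ℝ) 1, f t = ∑' k : ℕ, a k * t ^ k)
    (hg : ∀ t ∈ Set.Icc (-1 : ℝ) 1, g t = ∑' l : ℕ, b l * t ^ l)
    (lam θ : ℝ) (hirr : Irrational (lam / θ)) :
    IsStrictPosDefKernelC
      (fun p q : ℝ × Metric.sphere (0 : EllTwo) 1 =>
        ((f (⟪(p.2 : EllTwo), (q.2 : EllTwo)⟫ * Real.cos (lam * (p.1 - q.1))) *
          g (⟪(p.2 : EllTwo), (q.2 : EllTwo)⟫ * Real.cos (θ * (p.1 - q.1))) : ℝ) : ℂ)) := by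
  have hnorm : ∀ {n} (x : Fin n → ℝ × Metric.sphere (0 : EllTwo) 1) i,
      ‖((x i).2 : EllTwo)‖ = 1 := fun x i => norm_eq_of_mem_sphere (x i).2
  refine isStrictPosDefKernelC_of_quadForm (fun n x c => ?_) (fun n x c hx h => ?_)
  · exact quadForm_productKernelMatrix_nonneg (fun i => (hnorm x i).le) ha hb hsa hsb hf hg lam θ c
  · refine eq_zero_of_quadForm_productKernelMatrix_eq_zero (hnorm x) (fun i j hij => hx ?_)
      ha hb hsa hsb hae hao hbe hbo hf hg hirr h
    exact Prod.ext (Prod.ext_iff.mp hij).1 (Subtype.ext (Prod.ext_iff.mp hij).2)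

theorem product_spd_on_time_cross_sphere
    (a b : ℕ → ℝ) (ha : ∀ k, 0 ≤ a k) (hb : ∀ l, 0 ≤ b l)
    (hsa : Summable a) (hsb : Summable b)
    (hae : ({k : ℕ | 0 < a k} ∩ {n : ℕ | Even n}).Infinite)
    (hao : ({k : ℕ | 0 < a k} ∩ {n : ℕ | Odd n}).Infinite)
    (hbe : ({l : ℕ | 0 < b l} ∩ {n : ℕ | Even n}).Infinite)
    (hbo : ({l : ℕ | 0 < b l} ∩ {n : ℕ | Odd n}).Infinite)
    (f g : ℝ → ℝ)
    (hf : ∀ t ∈ Set.Icc (-1 : ℝ) 1, f t = ∑' k : ℕ, a k * t ^ k)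
    (hg : ∀ t ∈ Set.Icc (-1 : ℝ) 1, g t = ∑' l : ℕ, b l * t ^ l)
    (lam θ : ℝ) (hlam : lam ≠ 0) (hθ : θ ≠ 0) (hirr : Irrational (lam / θ)) :
    IsStrictPosDefKernelC
      (fun p q : ℝ × Metric.sphere (0 : EllTwo) 1 =>
        ((f (⟪(p.2 : EllTwo), (q.2 : EllTwo)⟫ * Real.cos (lam * (p.1 - q.1))) *
          g (⟪(p.2 : EllTwo), (q.2 : EllTwo)⟫ * Real.cos (θ * (p.1 - q.1))) : ℝ) : ℂ)) :=
  product_spd_on_time_cross_sphere_general a b ha hb hsa hsb hae hao hbe hbo f g hf hg lam θ hirr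

end
end

section
/- Let λ, θ be nonzero real numbers with λ/θ irrational, and let Δ be a nonzero real number. Then cos(λΔ)^k · cos(θΔ)^l tends to 0 as min(k,l) → ∞; that is, for every ε > 0 there exists N such that |cos(λΔ)^k cos(θΔ)^l| < ε whenever k ≥ N and l ≥ N. -/
/-! If both `|cos (λΔ)|` and `|cos (θΔ)|` were `1`, then `λΔ` and `θΔ` would be integer multiples
of `π`, making `λ / θ` rational. So one factor has absolute value `< 1` and the other `≤ 1`, and
the product is dominated by a geometric sequence. -/

open Real

theorem abs_cos_lt_one_or_of_irrational_div {x y : ℝ} (h : Irrational (x / y)) :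
    |cos x| < 1 ∨ |cos y| < 1 := by
  by_contra! hge
  obtain ⟨m, rfl⟩ := abs_cos_eq_one_iff.mp ((abs_cos_le_one x).antisymm hge.1)
  obtain ⟨n, rfl⟩ := abs_cos_eq_one_iff.mp ((abs_cos_le_one y).antisymm hge.2)
  refine h ⟨m / n, ?_⟩
  push_cast
  rw [mul_div_mul_right _ _ pi_ne_zero]

theorem exists_abs_pow_mul_pow_lt {a b ε : ℝ} (ha : |a| < 1) (hb : |b| ≤ 1) (hε : 0 < ε) :
    ∃ N : ℕ, ∀ k l : ℕ, N ≤ k → |a ^ k * b ^ l| < ε := by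
  obtain ⟨N, hN⟩ := exists_pow_lt_of_lt_one hε ha
  refine ⟨N, fun k l hk => ?_⟩
  calc |a ^ k * b ^ l| = |a| ^ k * |b| ^ l := by rw [abs_mul, abs_pow, abs_pow]
    _ ≤ |a| ^ N * 1 := by
      apply mul_le_mul (pow_le_pow_of_le_one (abs_nonneg a) ha.le hk)
        (pow_le_one₀ (abs_nonneg b) hb) (by positivity) (by positivity)
    _ < ε := by rwa [mul_one]

theorem cos_pow_mul_cos_pow_tendsto_zero_general
    (lam θ Δ : ℝ)
    (hirr : Irrational (lam / θ)) (hΔ : Δ ≠ 0) :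
    ∀ ε > 0, ∃ N : ℕ, ∀ k l : ℕ, N ≤ k → N ≤ l →
      |Real.cos (lam * Δ) ^ k * Real.cos (θ * Δ) ^ l| < ε := by
  intro ε hε
  have hratio : lam * Δ / (θ * Δ) = lam / θ := mul_div_mul_right _ _ hΔ
  rcases abs_cos_lt_one_or_of_irrational_div (hratio ▸ hirr) with h | h
  · obtain ⟨N, hN⟩ := exists_abs_pow_mul_pow_lt h (abs_cos_le_one _) hε
    exact ⟨N, fun k l hk _ => hN k l hk⟩
  · obtain ⟨N, hN⟩ := exists_abs_pow_mul_pow_lt h (abs_cos_le_one _) hε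
    exact ⟨N, fun k l _ hl => mul_comm (cos (θ * Δ) ^ l) _ ▸ hN l k hl⟩

theorem cos_pow_mul_cos_pow_tendsto_zero
    (lam θ Δ : ℝ) (hlam : lam ≠ 0) (hθ : θ ≠ 0)
    (hirr : Irrational (lam / θ)) (hΔ : Δ ≠ 0) :
    ∀ ε > 0, ∃ N : ℕ, ∀ k l : ℕ, N ≤ k → N ≤ l →
      |Real.cos (lam * Δ) ^ k * Real.cos (θ * Δ) ^ l| < ε :=
  cos_pow_mul_cos_pow_tendsto_zero_general lam θ Δ hirr hΔ
end

section
/- Let a, b : ℕ → ℝ be sequences with a_k ≥ 0 and b_l ≥ 0 for all k, l, and with Σ_{k=0}^∞ a_k < ∞ and Σ_{l=0}^∞ b_l < ∞. Define f(t) = Σ_{k=0}^∞ a_k t^k and g(t) = Σ_{l=0}^∞ b_l t^l for t ∈ [-1,1], and let α, β ≥ 0 be real numbers. Then the kernel (x,y) ∈ S^∞ × S^∞ ↦ α f(⟨x,y⟩) + β g(⟨x,y⟩) is strictly positive definite on S^∞ if, and only if, the set {k : α·a_k > 0} ∪ {l : β·b_l > 0} contains infinitely many even integers and infinitely many odd integers.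 -/
/-!
Write `w k = α a k + β b k`, so the kernel is `∑ₖ w k ⟪x, y⟫ ^ k` and its quadratic form at
points `xᵢ` with weights `cᵢ` is `∑ₖ w k Qₖ`, where `Qₖ = ∑ᵢⱼ cᵢ cⱼ ⟪xᵢ, xⱼ⟫ ^ k ≥ 0` by the
Schur product theorem. If the form vanishes, `Qₖ = 0` for infinitely many even and infinitely
many odd `k`. Letting `k → ∞` along each parity kills the pairs with `|⟪xᵢ, xⱼ⟫| < 1`; the two
limits differ only in the sign of the antipodal pairs, so their sum is `2 ∑ᵢ cᵢ²`, forcing `c = 0`.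

Conversely, if `w k > 0` for only finitely many `k` of one parity, all below `N`, take many
points `yᵢ` on a half circle and weights `d ≠ 0` annihilating every monomial of degree `< N` in
their coordinates, so that `Qₖ = 0` for `k < N`. The points `yᵢ`, `-yᵢ` with weights `dᵢ`,
`s dᵢ` have form `(1 + s (-1) ^ k) ^ 2 Qₖ` in degree `k`, and `s = ±1` makes this vanish in the
other parity.
-/

open scoped BigOperators RealInnerProductSpace

noncomputable section

open Filter Topology Matrix

theorem IsStrictPosDefKernel.sum_pos {X : Type*} {K : X → X → ℝ} (hK : IsStrictPosDefKernel K)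
    {ι : Type*} [Fintype ι] {x : ι → X} (hx : Function.Injective x) {c : ι → ℝ} (hc : c ≠ 0) :
    0 < ∑ i, ∑ j, c i * c j * K (x i) (x j) := by
  set σ := (Fintype.equivFin ι).symm
  have hcσ : c ∘ σ ≠ 0 := fun h => hc (funext fun i => by simpa using congrFun h (σ.symm i))
  exact (hK.2 _ (x ∘ σ) (c ∘ σ) (hx.comp σ.injective) hcσ).trans_eq
    (Fintype.sum_equiv σ _ _ fun i => Fintype.sum_equiv σ _ _ fun j => rfl)

theorem add_pos_iff_of_nonneg {α : Type*} [AddCommMonoid α] [LinearOrder α]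
    [IsOrderedCancelAddMonoid α] {a b : α} (ha : 0 ≤ a) (hb : 0 ≤ b) : 0 < a + b ↔ 0 < a ∨ 0 < b :=
  ⟨fun h => by contrapose! h; exact add_nonpos h.1 h.2,
    fun h => h.elim (add_pos_of_pos_of_nonneg · hb) (add_pos_of_nonneg_of_pos ha)⟩

theorem tendsto_pow_even {t : ℝ} (ht : |t| ≤ 1) :
    Tendsto (fun k => t ^ k) (atTop ⊓ 𝓟 {k | Even k}) (𝓝 (if |t| = 1 then 1 else 0)) := by
  split_ifs with h
  · refine tendsto_const_nhds.congr' (eventually_inf_principal.2 (.of_forall fun k hk => ?_))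
    dsimp only
    rw [← hk.pow_abs, h, one_pow]
  · exact (tendsto_pow_atTop_nhds_zero_of_abs_lt_one (ht.lt_of_ne h)).mono_left inf_le_left

theorem tendsto_pow_odd {t : ℝ} (ht : |t| ≤ 1) :
    Tendsto (fun k => t ^ k) (atTop ⊓ 𝓟 {k | Odd k}) (𝓝 (if |t| = 1 then t else 0)) := by
  split_ifs with h
  · refine tendsto_const_nhds.congr' (eventually_inf_principal.2 (.of_forall ?_))
    rintro _ ⟨m, rfl⟩
    dsimp only
    rw [pow_succ, pow_mul, ← sq_abs, h]
    simp
  · exact (tendsto_pow_atTop_nhds_zero_of_abs_lt_one (ht.lt_of_ne h)).mono_left inf_le_left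

theorem summable_mul_pow {w : ℕ → ℝ} (hw : ∀ k, 0 ≤ w k) (hsw : Summable w) {t : ℝ} (ht : |t| ≤ 1) :
    Summable fun k => w k * t ^ k := by
  refine hsw.of_norm_bounded fun k => ?_
  rw [norm_mul, norm_pow, Real.norm_eq_abs, Real.norm_eq_abs, abs_of_nonneg (hw k)]
  exact mul_le_of_le_one_right (hw k) (pow_le_one₀ (abs_nonneg t) ht)

section HadamardPowForm

variable {ι : Type*} [Fintype ι]

def hadamardPowForm (G : ι → ι → ℝ) (c : ι → ℝ) (k : ℕ) : ℝ :=
  ∑ i, ∑ j, c i * c j * G i j ^ k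

theorem Matrix.PosSemidef.hadamardPow {A : Matrix ι ι ℝ} (hA : A.PosSemidef) (k : ℕ) :
    (Matrix.of fun i j => A i j ^ k).PosSemidef := by
  induction k with
  | zero =>
    convert posSemidef_vecMulVec_self_star (1 : ι → ℝ)
    ext i j
    simp
  | succ k ih =>
    have h : (of fun i j => A i j ^ (k + 1)) = (of fun i j => A i j ^ k) ⊙ A := by
      ext i j
      simp [pow_succ]
    rw [h]
    exact ih.hadamard hA

theorem hadamardPowForm_nonneg {A : Matrix ι ι ℝ} (hA : A.PosSemidef) (c : ι → ℝ) (k : ℕ) :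
    0 ≤ hadamardPowForm A c k := by
  have h := (hA.hadamardPow k).dotProduct_mulVec_nonneg c
  simp only [dotProduct, mulVec, of_apply, star_trivial, Finset.mul_sum] at h
  exact h.trans_eq (Finset.sum_congr rfl fun i _ => Finset.sum_congr rfl fun j _ => by ring)

theorem eq_zero_of_frequently_hadamardPowForm_eq_zero {G : ι → ι → ℝ} {c : ι → ℝ}
    (hG : ∀ i j, |G i j| ≤ 1) (hG_eq_one : ∀ i j, G i j = 1 ↔ i = j)
    (heven : ∃ᶠ k in atTop, Even k ∧ hadamardPowForm G c k = 0)
    (hodd : ∃ᶠ k in atTop, Odd k ∧ hadamardPowForm G c k = 0) : c = 0 := by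
  classical
  have hlim_even : ∑ i, ∑ j, c i * c j * (if |G i j| = 1 then 1 else 0) = 0 :=
    isClosed_singleton.mem_of_frequently_of_tendsto (frequently_inf_principal.2 heven)
      (tendsto_finsetSum _ fun i _ => tendsto_finsetSum _ fun j _ =>
        (tendsto_pow_even (hG i j)).const_mul _)
  have hlim_odd : ∑ i, ∑ j, c i * c j * (if |G i j| = 1 then G i j else 0) = 0 :=
    isClosed_singleton.mem_of_frequently_of_tendsto (frequently_inf_principal.2 hodd)
      (tendsto_finsetSum _ fun i _ => tendsto_finsetSum _ fun j _ =>
        (tendsto_pow_odd (hG i j)).const_mul _)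
  have hlim_add : ∀ i j, (if |G i j| = 1 then 1 else 0) + (if |G i j| = 1 then G i j else 0)
      = if i = j then 2 else 0 := by
    intro i j
    rw [← hG_eq_one]
    rcases eq_or_ne (G i j) 1 with h1 | h1
    · norm_num [h1]
    rcases eq_or_ne (G i j) (-1) with h2 | h2
    · norm_num [h2]
    have : |G i j| ≠ 1 := by rw [Ne, abs_eq zero_le_one]; tauto
    simp [h1, this]
  have hdiag : ∑ i, ∑ j, c i * c j * (if i = j then 2 else 0) = 0 := by
    simp_rw [← hlim_add, mul_add, Finset.sum_add_distrib, hlim_even, hlim_odd, add_zero]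
  simp only [mul_ite, mul_zero, Finset.sum_ite_eq, Finset.mem_univ, if_true] at hdiag
  funext i
  have := (Finset.sum_eq_zero_iff_of_nonneg fun i _ =>
    mul_nonneg (mul_self_nonneg (c i)) zero_le_two).1 hdiag i (Finset.mem_univ i)
  simpa using this

theorem hasSum_mul_hadamardPowForm {w : ℕ → ℝ} (hw : ∀ k, 0 ≤ w k) (hsw : Summable w)
    {G : ι → ι → ℝ} (hG : ∀ i j, |G i j| ≤ 1) (c : ι → ℝ) :
    HasSum (fun k => w k * hadamardPowForm G c k)
      (∑ i, ∑ j, c i * c j * ∑' k, w k * G i j ^ k) := by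
  have hsum := hasSum_sum (s := Finset.univ) fun i _ => hasSum_sum (s := Finset.univ) fun j _ =>
    (summable_mul_pow hw hsw (hG i j)).hasSum.mul_left (c i * c j)
  refine hsum.congr_fun fun k => ?_
  simp only [hadamardPowForm, Finset.mul_sum]
  exact Finset.sum_congr rfl fun i _ => Finset.sum_congr rfl fun j _ => by ring

theorem hadamardPowForm_eq_zero_of_moments {u v d : ι → ℝ} {k : ℕ}
    (h : ∀ r ≤ k, ∑ i, d i * (u i ^ r * v i ^ (k - r)) = 0) :
    hadamardPowForm (fun i j => u i * u j + v i * v j) d k = 0 := by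
  set m : ℕ → ι → ℝ := fun r i => d i * (u i ^ r * v i ^ (k - r))
  have hexpand : ∀ i j, d i * d j * (u i * u j + v i * v j) ^ k
      = ∑ r ∈ Finset.range (k + 1), (k.choose r : ℝ) * (m r i * m r j) := by
    intro i j
    rw [add_pow, Finset.mul_sum]
    exact Finset.sum_congr rfl fun r _ => by simp only [m]; ring
  calc hadamardPowForm (fun i j => u i * u j + v i * v j) d k
      = ∑ i, ∑ r ∈ Finset.range (k + 1), ∑ j, (k.choose r : ℝ) * (m r i * m r j) := by
        simp only [hadamardPowForm, hexpand]
        exact Finset.sum_congr rfl fun i _ => Finset.sum_comm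
    _ = ∑ r ∈ Finset.range (k + 1), (k.choose r : ℝ) * ((∑ i, m r i) * ∑ j, m r j) := by
        rw [Finset.sum_comm]
        refine Finset.sum_congr rfl fun r _ => ?_
        rw [Finset.sum_mul_sum, Finset.mul_sum]
        simp only [Finset.mul_sum]
    _ = 0 := Finset.sum_eq_zero fun r hr => by
        rw [h r (Nat.lt_succ_iff.1 (Finset.mem_range.1 hr)), zero_mul, mul_zero]

theorem hadamardPowForm_sumElim_neg {E : Type*} [NormedAddCommGroup E] [InnerProductSpace ℝ E]
    (x : ι ⊕ ι → E) (hx : ∀ i, x (.inr i) = -x (.inl i)) (d : ι → ℝ) (s : ℝ) (k : ℕ) :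
    hadamardPowForm (fun I J => ⟪x I, x J⟫) (Sum.elim d (s • d)) k
      = (1 + s * (-1) ^ k) ^ 2 * hadamardPowForm (fun i j => ⟪x (.inl i), x (.inl j)⟫) d k := by
  have hsign : ((-1 : ℝ) ^ k) ^ 2 = 1 := by rw [← pow_mul, mul_comm, pow_mul]; norm_num
  simp only [hadamardPowForm, Fintype.sum_sum_type, Sum.elim_inl, Sum.elim_inr, hx,
    inner_neg_left, inner_neg_right, neg_neg, Pi.smul_apply, smul_eq_mul,
    Finset.mul_sum, ← Finset.sum_add_distrib]
  refine Finset.sum_congr rfl fun i _ => Finset.sum_congr rfl fun j _ => ?_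
  rw [neg_pow ⟪x (.inl i), x (.inl j)⟫]
  linear_combination (-(d i * d j * ⟪x (.inl i), x (.inl j)⟫ ^ k * s ^ 2)) * hsign

end HadamardPowForm

theorem exists_ne_zero_forall_sum_mul_eq_zero {ι κ : Type*} [Fintype ι] [Fintype κ]
    (h : Fintype.card κ < Fintype.card ι) (f : κ → ι → ℝ) :
    ∃ d : ι → ℝ, d ≠ 0 ∧ ∀ r, ∑ i, d i * f r i = 0 := by
  have hdep : ¬LinearIndependent ℝ fun i r => f r i := fun hli =>
    h.not_ge (by simpa using hli.fintype_card_le_finrank)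
  obtain ⟨d, hd, i, hi⟩ := Fintype.not_linearIndependent_iff.1 hdep
  refine ⟨d, fun h0 => hi (congrFun h0 i), fun r => ?_⟩
  simpa using congrFun hd r

theorem exists_upperSemicircle_moments_eq_zero (N : ℕ) :
    ∃ (p : ℕ) (u v d : Fin p → ℝ), Function.Injective u ∧ (∀ i, 0 < v i) ∧
      (∀ i, u i ^ 2 + v i ^ 2 = 1) ∧ d ≠ 0 ∧
      ∀ r < N, ∀ l < N, ∑ i, d i * (u i ^ r * v i ^ l) = 0 := by
  set p := N * N + 1
  set u : Fin p → ℝ := fun i => (i : ℝ) / p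
  have hu : ∀ i, u i ^ 2 < 1 := fun i => by
    have : u i < 1 := (div_lt_one (by positivity)).2 (by exact_mod_cast i.2)
    nlinarith [show 0 ≤ u i by positivity]
  obtain ⟨d, hd, hmom⟩ := exists_ne_zero_forall_sum_mul_eq_zero (ι := Fin p)
    (by simp [p]) fun rl : Fin N × Fin N => fun i => u i ^ (rl.1 : ℕ) * √(1 - u i ^ 2) ^ (rl.2 : ℕ)
  refine ⟨p, u, fun i => √(1 - u i ^ 2), d, fun i j hij => ?_,
    fun i => Real.sqrt_pos.2 (by linarith [hu i]),
    fun i => by rw [Real.sq_sqrt (by linarith [hu i])]; ring, hd,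
    fun r hr l hl => hmom (⟨r, hr⟩, ⟨l, hl⟩)⟩
  have : ((i : ℕ) : ℝ) = (j : ℕ) := by
    simpa [u, div_left_inj' (show (p : ℝ) ≠ 0 by positivity)] using hij
  exact Fin.ext (by exact_mod_cast this)

section Sphere

variable {E : Type*} [NormedAddCommGroup E] [InnerProductSpace ℝ E] {w : ℕ → ℝ}

theorem abs_real_inner_le_one_of_mem_sphere (x y : Metric.sphere (0 : E) 1) :
    |⟪(x : E), (y : E)⟫| ≤ 1 :=
  abs_le.2 (real_inner_mem_Icc_of_norm_eq_one (norm_eq_of_mem_sphere x) (norm_eq_of_mem_sphere y))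

theorem exists_unit_vectors_hadamardPowForm_eq_zero {e : Fin 2 → E} (he : Orthonormal ℝ e)
    (N : ℕ) :
    ∃ (p : ℕ) (y : Fin p → E) (d : Fin p → ℝ), (∀ i, ‖y i‖ = 1) ∧ Function.Injective y ∧
      (∀ i j, y i ≠ -y j) ∧ d ≠ 0 ∧
      ∀ k < N, hadamardPowForm (fun i j => ⟪y i, y j⟫) d k = 0 := by
  obtain ⟨p, u, v, d, hu, hv, huv, hd, hmom⟩ := exists_upperSemicircle_moments_eq_zero N
  have he' := orthonormal_iff_ite.1 he
  set y : Fin p → E := fun i => u i • e 0 + v i • e 1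
  have hinner : ∀ i j, ⟪y i, y j⟫ = u i * u j + v i * v j := fun i j => by
    simp [y, inner_add_left, inner_add_right, real_inner_smul_left, real_inner_smul_right, he',
      he.1]
    ring
  have hcoord : ∀ i, ⟪y i, e 0⟫ = u i ∧ ⟪y i, e 1⟫ = v i := fun i => by
    simp [y, inner_add_left, real_inner_smul_left, he', he.1]
  refine ⟨p, y, d, fun i => ?_, fun i j hij => hu ?_, fun i j hij => ?_, hd, fun k hk => ?_⟩
  · rw [norm_eq_sqrt_real_inner, hinner, ← sq, ← sq, huv, Real.sqrt_one]
  · rw [← (hcoord i).1, ← (hcoord j).1, hij]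
  · have := (hcoord i).2
    rw [hij, inner_neg_left, (hcoord j).2] at this
    linarith [hv i, hv j]
  · simp only [hinner]
    exact hadamardPowForm_eq_zero_of_moments fun r hr => hmom r (by omega) (k - r) (by omega)

theorem sum_sum_mul_tsum_inner_pow (hw : ∀ k, 0 ≤ w k) (hsw : Summable w) {ι : Type*} [Fintype ι]
    (x : ι → Metric.sphere (0 : E) 1) (c : ι → ℝ) :
    ∑ i, ∑ j, c i * c j * ∑' k, w k * ⟪(x i : E), (x j : E)⟫ ^ k
      = ∑' k, w k * hadamardPowForm (fun i j => ⟪(x i : E), (x j : E)⟫) c k :=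
  (hasSum_mul_hadamardPowForm hw hsw
    (fun i j => abs_real_inner_le_one_of_mem_sphere (x i) (x j)) c).tsum_eq.symm

theorem isStrictPosDefKernel_tsum_inner_pow (hw : ∀ k, 0 ≤ w k) (hsw : Summable w)
    (heven : ({k | 0 < w k} ∩ {k | Even k}).Infinite)
    (hodd : ({k | 0 < w k} ∩ {k | Odd k}).Infinite) :
    IsStrictPosDefKernel fun x y : Metric.sphere (0 : E) 1 =>
      ∑' k, w k * ⟪(x : E), (y : E)⟫ ^ k := by
  have hQ {n : ℕ} (x : Fin n → Metric.sphere (0 : E) 1) (c : Fin n → ℝ) (k : ℕ) :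
      0 ≤ hadamardPowForm (fun i j => ⟪(x i : E), (x j : E)⟫) c k :=
    hadamardPowForm_nonneg (posSemidef_gram ℝ fun i => (x i : E)) c k
  refine ⟨fun n x c => ?_, fun n x c hx hc => ?_⟩
  · rw [sum_sum_mul_tsum_inner_pow hw hsw]
    exact tsum_nonneg fun k => mul_nonneg (hw k) (hQ x c k)
  rw [sum_sum_mul_tsum_inner_pow hw hsw]
  obtain ⟨k, hk⟩ : ∃ k, 0 < w k * hadamardPowForm (fun i j => ⟪(x i : E), (x j : E)⟫) c k := by
    by_contra! hnone
    have hzero : ∀ k, 0 < w k → hadamardPowForm (fun i j => ⟪(x i : E), (x j : E)⟫) c k = 0 :=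
      fun k hk => le_antisymm (by nlinarith [hnone k, hQ x c k]) (hQ x c k)
    refine hc (eq_zero_of_frequently_hadamardPowForm_eq_zero
      (fun i j => abs_real_inner_le_one_of_mem_sphere (x i) (x j)) (fun i j => ?_)
      (Nat.frequently_atTop_iff_infinite.2 (heven.mono fun k hk => ⟨hk.2, hzero k hk.1⟩))
      (Nat.frequently_atTop_iff_infinite.2 (hodd.mono fun k hk => ⟨hk.2, hzero k hk.1⟩)))
    exact (inner_eq_one_iff_of_norm_eq_one (norm_eq_of_mem_sphere _)
      (norm_eq_of_mem_sphere _)).trans (Subtype.coe_inj.trans hx.eq_iff)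
  exact ((hasSum_mul_hadamardPowForm hw hsw (fun i j => abs_real_inner_le_one_of_mem_sphere
    (x i) (x j)) c).summable).tsum_pos (fun k => mul_nonneg (hw k) (hQ x c k)) k hk

theorem not_isStrictPosDefKernel_tsum_inner_pow {e : Fin 2 → E} (he : Orthonormal ℝ e)
    (hw : ∀ k, 0 ≤ w k) (hsw : Summable w) {s : ℝ}
    (hfin : {k | 0 < w k ∧ s * (-1) ^ k ≠ -1}.Finite) :
    ¬IsStrictPosDefKernel fun x y : Metric.sphere (0 : E) 1 =>
      ∑' k, w k * ⟪(x : E), (y : E)⟫ ^ k := by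
  intro hK
  obtain ⟨N, hN⟩ := hfin.bddAbove
  obtain ⟨p, y, d, hy, hy_inj, hy_neg, hd, hq⟩ :=
    exists_unit_vectors_hadamardPowForm_eq_zero he (N + 1)
  let x : Fin p ⊕ Fin p → Metric.sphere (0 : E) 1 :=
    Sum.elim (fun i => ⟨y i, by simp [hy]⟩) (fun i => ⟨-y i, by simp [hy]⟩)
  have hx : Function.Injective x :=
    Function.Injective.sumElim (fun i j h => hy_inj (congrArg Subtype.val h))
      (fun i j h => hy_inj (neg_injective (congrArg Subtype.val h)))
      (fun i j h => hy_neg i j (congrArg Subtype.val h))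
  have hc : Sum.elim d (s • d) ≠ 0 := fun h => hd (funext fun i => congrFun h (.inl i))
  have hpos := hK.sum_pos hx hc
  simp only [sum_sum_mul_tsum_inner_pow hw hsw,
    hadamardPowForm_sumElim_neg (fun I => (x I : E)) (fun i => rfl) d s] at hpos
  have hterm : ∀ k, w k * ((1 + s * (-1) ^ k) ^ 2 * hadamardPowForm (fun i j => ⟪y i, y j⟫) d k)
      = 0 := by
    intro k
    rcases (hw k).eq_or_lt with h | h
    · rw [← h, zero_mul]
    by_cases hs : s * (-1) ^ k = -1
    · rw [hs]; ring
    rw [hq k (Nat.lt_succ_of_le (hN ⟨h, hs⟩)), mul_zero, mul_zero]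
  exact hpos.ne' ((tsum_congr hterm).trans tsum_zero)

theorem isStrictPosDefKernel_tsum_inner_pow_iff {e : Fin 2 → E} (he : Orthonormal ℝ e)
    (hw : ∀ k, 0 ≤ w k) (hsw : Summable w) :
    (IsStrictPosDefKernel fun x y : Metric.sphere (0 : E) 1 =>
      ∑' k, w k * ⟪(x : E), (y : E)⟫ ^ k) ↔
    ({k | 0 < w k} ∩ {k | Even k}).Infinite ∧ ({k | 0 < w k} ∩ {k | Odd k}).Infinite := by
  have hneg : (-1 : ℝ) ≠ 1 := by norm_num
  refine ⟨fun hK => ⟨fun heven => ?_, fun hodd => ?_⟩,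
    fun h => isStrictPosDefKernel_tsum_inner_pow hw hsw h.1 h.2⟩
  · refine not_isStrictPosDefKernel_tsum_inner_pow he hw hsw (s := 1) (heven.subset ?_) hK
    rintro k ⟨hk, hs⟩
    rw [one_mul, Ne, neg_one_pow_eq_neg_one_iff_odd hneg, Nat.not_odd_iff_even] at hs
    exact ⟨hk, hs⟩
  · refine not_isStrictPosDefKernel_tsum_inner_pow he hw hsw (s := -1) (hodd.subset ?_) hK
    rintro k ⟨hk, hs⟩
    rw [neg_one_mul, Ne, neg_inj, neg_one_pow_eq_one_iff_even hneg, Nat.not_even_iff_odd] at hs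
    exact ⟨hk, hs⟩

end Sphere

theorem sum_spd_on_infinite_sphere
    (a b : ℕ → ℝ) (ha : ∀ k, 0 ≤ a k) (hb : ∀ l, 0 ≤ b l)
    (hsa : Summable a) (hsb : Summable b)
    (f g : ℝ → ℝ)
    (hf : ∀ t ∈ Set.Icc (-1 : ℝ) 1, f t = ∑' k : ℕ, a k * t ^ k)
    (hg : ∀ t ∈ Set.Icc (-1 : ℝ) 1, g t = ∑' l : ℕ, b l * t ^ l)
    (α β : ℝ) (hα : 0 ≤ α) (hβ : 0 ≤ β) :
    IsStrictPosDefKernel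
      (fun x y : Metric.sphere (0 : EllTwo) 1 =>
        α * f ⟪(x : EllTwo), (y : EllTwo)⟫ + β * g ⟪(x : EllTwo), (y : EllTwo)⟫) ↔
    (({k : ℕ | 0 < α * a k} ∪ {l : ℕ | 0 < β * b l}) ∩ {n : ℕ | Even n}).Infinite ∧
      (({k : ℕ | 0 < α * a k} ∪ {l : ℕ | 0 < β * b l}) ∩ {n : ℕ | Odd n}).Infinite := by
  set w : ℕ → ℝ := fun k => α * a k + β * b k
  have hαa : ∀ k, 0 ≤ α * a k := fun k => mul_nonneg hα (ha k)
  have hβb : ∀ k, 0 ≤ β * b k := fun k => mul_nonneg hβ (hb k)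
  have hkernel : (fun x y : Metric.sphere (0 : EllTwo) 1 =>
      α * f ⟪(x : EllTwo), (y : EllTwo)⟫ + β * g ⟪(x : EllTwo), (y : EllTwo)⟫)
      = fun x y : Metric.sphere (0 : EllTwo) 1 => ∑' k, w k * ⟪(x : EllTwo), (y : EllTwo)⟫ ^ k := by
    funext x y
    have ht := abs_real_inner_le_one_of_mem_sphere x y
    rw [hf _ (abs_le.1 ht), hg _ (abs_le.1 ht), ← tsum_mul_left, ← tsum_mul_left,
      ← ((summable_mul_pow ha hsa ht).mul_left α).tsum_add
        ((summable_mul_pow hb hsb ht).mul_left β)]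
    exact tsum_congr fun k => by ring
  have hsupport : {k | 0 < α * a k} ∪ {l | 0 < β * b l} = {k | 0 < w k} :=
    Set.ext fun k => (add_pos_iff_of_nonneg (hαa k) (hβb k)).symm
  rw [hkernel, hsupport]
  exact isStrictPosDefKernel_tsum_inner_pow_iff
    ((default : HilbertBasis ℕ ℝ EllTwo).orthonormal.comp _ Fin.val_injective)
    (fun k => add_nonneg (hαa k) (hβb k)) ((hsa.mul_left α).add (hsb.mul_left β))
end
end

section
/- Let a, b : ℕ → ℝ be sequences with a_k ≥ 0 and b_l ≥ 0 for all k, l, and with Σ_{k=0}^∞ a_k < ∞ and Σ_{l=0}^∞ b_l < ∞. Define c_0 = a_0 b_0 + (1/2) Σ_{μ=1}^∞ a_μ b_μ, and for m ≥ 1 define c_m = (1/2) Σ_{ν=0}^{m} a_ν b_{m−ν} + (1/2) Σ_{μ=0}^∞ (a_μ b_{μ+m} + a_{μ+m} b_μ). Then Σ_{m=0}^∞ c_m < ∞ and, for every θ ∈ ℝ, (Σ_{k=0}^∞ a_k cos(kθ)) · (Σ_{l=0}^∞ b_l cos(lθ)) = Σ_{m=0}^∞ c_m cos(mθ). -/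
/-!
Since `cos kθ cos lθ = ½ cos (k + l)θ + ½ cos |k - l|θ`, the product of the two series is the
absolutely convergent double series `∑_{k,l} ½ a_k b_l (cos (k + l)θ + cos |k - l|θ)`. Regrouping it
by frequency, `c_m` is the total weight of the pairs with `k + l = m` plus that of the pairs with
`|k - l| = m`; the latter are the diagonal for `m = 0` and the two shifted diagonals
`(μ, μ + m)`, `(μ + m, μ)` for `m ≥ 1`.
-/

open Real Set

section Regrouping

variable {β γ : Type*}

theorem Summable.mul_of_norm_le {w u : β → ℝ} (hw : Summable w) {C : ℝ} (hu : ∀ b, ‖u b‖ ≤ C) :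
    Summable fun b => w b * u b :=
  .of_norm_bounded (hw.abs.mul_right C) fun b => by
    rw [norm_mul]
    exact mul_le_mul_of_nonneg_left (hu b) (abs_nonneg _)

theorem Summable.hasSum_fiberwise_mul {w : β → ℝ} (hw : Summable w) (g : β → γ) {u : γ → ℝ} {C : ℝ}
    (hu : ∀ m, ‖u m‖ ≤ C) :
    HasSum (fun m => (∑' b : g ⁻¹' {m}, w b) * u m) (∑' b, w b * u (g b)) := by
  have hfiber (m : γ) : ∑' b : g ⁻¹' {m}, w b * u (g b) = (∑' b : g ⁻¹' {m}, w b) * u m := by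
    rw [← tsum_mul_right]
    exact tsum_congr fun b => by rw [show g b = m from b.2]
  simpa only [hfiber] using (hw.mul_of_norm_le fun b => hu (g b)).hasSum.tsum_fiberwise g

end Regrouping

section Fibers

variable {α : Type*} [AddCommMonoid α] [TopologicalSpace α]

theorem tsum_fiber_add_eq_sum_range (f : ℕ × ℕ → α) (m : ℕ) :
    ∑' p : (fun p : ℕ × ℕ => p.1 + p.2) ⁻¹' {m}, f p = ∑ ν ∈ Finset.range (m + 1), f (ν, m - ν) := by
  have : (fun p : ℕ × ℕ => p.1 + p.2) ⁻¹' {m} = ↑(Finset.HasAntidiagonal.antidiagonal m) := by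
    ext p; simp
  rw [this, Finset.tsum_subtype', Finset.Nat.sum_antidiagonal_eq_sum_range_succ_mk]

theorem tsum_fiber_dist_zero (f : ℕ × ℕ → α) :
    ∑' p : (fun p : ℕ × ℕ => Nat.dist p.1 p.2) ⁻¹' {0}, f p = ∑' μ, f (μ, μ) := by
  have : (fun p : ℕ × ℕ => Nat.dist p.1 p.2) ⁻¹' {0} = range fun μ => (μ, μ) := by
    ext ⟨k, l⟩
    simp only [mem_preimage, mem_singleton_iff, mem_range, Prod.mk.injEq, Nat.dist]
    constructor
    · exact fun h => ⟨k, rfl, by omega⟩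
    · rintro ⟨μ, rfl, rfl⟩
      omega
  rw [this, tsum_range _ fun μ ν h => congrArg Prod.fst h]

end Fibers

theorem tsum_fiber_dist_of_pos {α : Type*} [AddCommGroup α] [UniformSpace α]
    [IsUniformAddGroup α] [CompleteSpace α] [T2Space α] {f : ℕ × ℕ → α}
    (hf : Summable f) {m : ℕ} (hm : 0 < m) :
    ∑' p : (fun p : ℕ × ℕ => Nat.dist p.1 p.2) ⁻¹' {m}, f p =
      ∑' μ, (f (μ, μ + m) + f (μ + m, μ)) := by
  have hu : Function.Injective fun μ : ℕ => (μ, μ + m) := fun μ ν h => congrArg Prod.fst h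
  have hv : Function.Injective fun μ : ℕ => (μ + m, μ) := fun μ ν h => congrArg Prod.snd h
  have hfiber : (fun p : ℕ × ℕ => Nat.dist p.1 p.2) ⁻¹' {m} =
      (range fun μ => (μ, μ + m)) ∪ range fun μ => (μ + m, μ) := by
    ext ⟨k, l⟩
    simp only [mem_preimage, mem_singleton_iff, mem_union, mem_range, Prod.mk.injEq, Nat.dist]
    constructor
    · intro h
      rcases le_total k l with hkl | hkl
      · exact Or.inl ⟨k, rfl, by omega⟩
      · exact Or.inr ⟨l, by omega, rfl⟩
    · rintro (⟨μ, rfl, rfl⟩ | ⟨μ, rfl, rfl⟩) <;> omega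
  have hdisj : Disjoint (range fun μ => (μ, μ + m)) (range fun μ => (μ + m, μ)) := by
    rw [Set.disjoint_left]
    rintro _ ⟨μ, rfl⟩ ⟨ν, h⟩
    simp only [Prod.mk.injEq] at h
    omega
  rw [hfiber, (hf.subtype _).tsum_union_disjoint hdisj (hf.subtype _), tsum_range _ hu,
    tsum_range _ hv]
  exact ((hf.comp_injective hu).tsum_add (hf.comp_injective hv)).symm

theorem cos_natCast_dist_mul (k l : ℕ) (θ : ℝ) :
    cos ((Nat.dist k l : ℝ) * θ) = cos (((k : ℝ) - l) * θ) := by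
  rcases le_total k l with h | h
  · rw [Nat.dist_eq_sub_of_le h, Nat.cast_sub h, ← cos_neg]; ring_nf
  · rw [Nat.dist_eq_sub_of_le_right h, Nat.cast_sub h]

theorem cos_mul_cos_natCast (k l : ℕ) (θ : ℝ) :
    cos (k * θ) * cos (l * θ) =
      cos (((k + l : ℕ) : ℝ) * θ) / 2 + cos ((Nat.dist k l : ℝ) * θ) / 2 := by
  rw [cos_natCast_dist_mul, Nat.cast_add, add_mul, sub_mul, cos_add, cos_sub]
  ring

theorem tsum_mul_cos_mul_tsum_mul_cos {a b : ℕ → ℝ} (ha : Summable a) (hb : Summable b) (θ : ℝ) :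
    (∑' k : ℕ, a k * cos (k * θ)) * (∑' l : ℕ, b l * cos (l * θ)) =
      ∑' p : ℕ × ℕ, a p.1 * b p.2 / 2 * cos (((p.1 + p.2 : ℕ) : ℝ) * θ) +
        ∑' p : ℕ × ℕ, a p.1 * b p.2 / 2 * cos ((Nat.dist p.1 p.2 : ℝ) * θ) := by
  have hab : Summable fun p : ℕ × ℕ => a p.1 * b p.2 / 2 :=
    (summable_mul_of_summable_norm ha.norm hb.norm).div_const 2
  have hcos : ∀ x : ℝ, ‖cos x‖ ≤ 1 := abs_cos_le_one
  rw [tsum_mul_tsum_of_summable_norm (ha.mul_of_norm_le fun k => hcos _).norm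
    (hb.mul_of_norm_le fun l => hcos _).norm,
    ← (hab.mul_of_norm_le fun p => hcos _).tsum_add (hab.mul_of_norm_le fun p => hcos _)]
  refine tsum_congr fun p => ?_
  rw [mul_mul_mul_comm, cos_mul_cos_natCast]
  ring

theorem cosine_series_product_general
    (a b : ℕ → ℝ)
    (hsa : Summable a) (hsb : Summable b)
    (c : ℕ → ℝ)
    (hc0 : c 0 = a 0 * b 0 + (1 / 2) * ∑' μ : ℕ, a (μ + 1) * b (μ + 1))
    (hcm : ∀ m : ℕ, 1 ≤ m →
      c m = (1 / 2) * (∑ ν ∈ Finset.range (m + 1), a ν * b (m - ν)) +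
        (1 / 2) * ∑' μ : ℕ, (a μ * b (μ + m) + a (μ + m) * b μ)) :
    Summable c ∧
      ∀ θ : ℝ,
        (∑' k : ℕ, a k * Real.cos ((k : ℝ) * θ)) *
            (∑' l : ℕ, b l * Real.cos ((l : ℝ) * θ)) =
          ∑' m : ℕ, c m * Real.cos ((m : ℝ) * θ) := by
  set w : ℕ × ℕ → ℝ := fun p => a p.1 * b p.2 / 2
  have hw : Summable w := (summable_mul_of_summable_norm hsa.norm hsb.norm).div_const 2
  have hc (m : ℕ) : c m = ∑' p : (fun p : ℕ × ℕ => p.1 + p.2) ⁻¹' {m}, w p +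
      ∑' p : (fun p : ℕ × ℕ => Nat.dist p.1 p.2) ⁻¹' {m}, w p := by
    rw [tsum_fiber_add_eq_sum_range]
    rcases Nat.eq_zero_or_pos m with rfl | hm
    · have hdiag : Summable fun μ => w (μ, μ) :=
        hw.comp_injective fun μ ν h => congrArg Prod.fst h
      rw [hc0, tsum_fiber_dist_zero, hdiag.tsum_eq_zero_add]
      simp only [w, zero_add, Finset.sum_range_one, Nat.sub_self, tsum_div_const]
      ring
    · rw [hcm m hm, tsum_fiber_dist_of_pos hw hm]
      simp only [w, ← add_div, ← Finset.sum_div, tsum_div_const]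
      ring
  have hcos (θ : ℝ) (m : ℕ) : ‖cos (m * θ)‖ ≤ 1 := abs_cos_le_one _
  have key (θ : ℝ) : HasSum (fun m : ℕ => c m * cos (m * θ))
      ((∑' k : ℕ, a k * cos (k * θ)) * (∑' l : ℕ, b l * cos (l * θ))) := by
    simp_rw [tsum_mul_cos_mul_tsum_mul_cos hsa hsb, hc, add_mul]
    exact (hw.hasSum_fiberwise_mul _ (hcos θ)).add (hw.hasSum_fiberwise_mul _ (hcos θ))
  exact ⟨by simpa using (key 0).summable, fun θ => (key θ).tsum_eq.symm⟩

theorem cosine_series_product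
    (a b : ℕ → ℝ) (ha : ∀ k, 0 ≤ a k) (hb : ∀ l, 0 ≤ b l)
    (hsa : Summable a) (hsb : Summable b)
    (c : ℕ → ℝ)
    (hc0 : c 0 = a 0 * b 0 + (1 / 2) * ∑' μ : ℕ, a (μ + 1) * b (μ + 1))
    (hcm : ∀ m : ℕ, 1 ≤ m →
      c m = (1 / 2) * (∑ ν ∈ Finset.range (m + 1), a ν * b (m - ν)) +
        (1 / 2) * ∑' μ : ℕ, (a μ * b (μ + m) + a (μ + m) * b μ)) :
    Summable c ∧
      ∀ θ : ℝ,
        (∑' k : ℕ, a k * Real.cos ((k : ℝ) * θ)) *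
            (∑' l : ℕ, b l * Real.cos ((l : ℝ) * θ)) =
          ∑' m : ℕ, c m * Real.cos ((m : ℝ) * θ) :=
  cosine_series_product_general a b hsa hsb c hc0 hcm
end

section
/- Define f, g : [-1,1] → ℝ by f(t) = 1 + t and g(t) = Σ_{k=0}^∞ 3^{−(2k+1)} t^{2k+1}. Then: (1) the kernels (x,y) ↦ f(⟨x,y⟩) and (x,y) ↦ g(⟨x,y⟩) are positive definite on S^∞ but neither is strictly positive definite on S^∞; and (2) the product kernel (x,y) ↦ f(⟨x,y⟩) g(⟨x,y⟩) is strictly positive definite on S^∞. -/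
open scoped BigOperators RealInnerProductSpace

noncomputable section

/-!
Each power `⟪x, y⟫ ^ m` is a positive definite kernel, by the Schur product theorem applied to
Gram matrices. The quadratic form of `f` is `(∑ cᵢ)² + ‖∑ cᵢ xᵢ‖²`, which vanishes at the
points `u, -u, v, -v` with weights `1, 1, -1, -1`; `g` is odd, so `u, -u` with weights `1, 1`
kill its form. On `[-1, 1]`, `f g = ∑ₖ 3^{-(2k+1)} t^{2k+1} (1 + t)`. For distinct unit vectors
the `k`-th quadratic form is nonnegative and tends to `2 ∑ cᵢ² > 0`, because `t ^ m * (1 + t)`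
tends to `2` at `t = 1` and to `0` at every other `t ∈ [-1, 1]`.
-/

open Filter Topology

section InnerPowerKernels

variable {E : Type*} [NormedAddCommGroup E] [InnerProductSpace ℝ E] {ι : Type*} [Fintype ι]

theorem Matrix.PosSemidef.sum_sum_mul_nonneg {M : Matrix ι ι ℝ} (hM : M.PosSemidef)
    (c : ι → ℝ) : 0 ≤ ∑ i, ∑ j, c i * c j * M i j := by
  have h := hM.dotProduct_mulVec_nonneg c
  simp only [star_trivial, dotProduct, Matrix.mulVec, Finset.mul_sum] at h
  exact h.trans_eq <| Finset.sum_congr rfl fun i _ => Finset.sum_congr rfl fun j _ => by ring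

theorem posSemidef_inner_pow (x : ι → E) (m : ℕ) :
    (Matrix.of fun i j => ⟪x i, x j⟫ ^ m).PosSemidef := by
  induction m with
  | zero =>
    have h : (Matrix.of fun i j => ⟪x i, x j⟫ ^ 0) = Matrix.gram ℝ (fun _ : ι => (1 : ℝ)) := by
      ext i j
      simp
    rw [h]
    exact Matrix.posSemidef_gram ℝ _
  | succ m ih =>
    have h : (Matrix.of fun i j => ⟪x i, x j⟫ ^ (m + 1)) =
        (Matrix.of fun i j => ⟪x i, x j⟫ ^ m).hadamard (Matrix.gram ℝ x) := by
      ext i j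
      simp [pow_succ]
    rw [h]
    exact ih.hadamard (Matrix.posSemidef_gram ℝ x)

theorem sum_sum_mul_inner_pow_nonneg (x : ι → E) (c : ι → ℝ) (m : ℕ) :
    0 ≤ ∑ i, ∑ j, c i * c j * ⟪x i, x j⟫ ^ m :=
  (posSemidef_inner_pow x m).sum_sum_mul_nonneg c

theorem sum_sum_mul_inner_pow_mul_one_add_nonneg (x : ι → E) (c : ι → ℝ) (m : ℕ) :
    0 ≤ ∑ i, ∑ j, c i * c j * (⟪x i, x j⟫ ^ m * (1 + ⟪x i, x j⟫)) := by
  have h := add_nonneg (sum_sum_mul_inner_pow_nonneg x c m)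
    (sum_sum_mul_inner_pow_nonneg x c (m + 1))
  simp_rw [← Finset.sum_add_distrib] at h
  exact h.trans_eq <| Finset.sum_congr rfl fun i _ => Finset.sum_congr rfl fun j _ => by ring

theorem sum_sum_mul_inner_eq_norm_sq (x : ι → E) (c : ι → ℝ) :
    ∑ i, ∑ j, c i * c j * ⟪x i, x j⟫ = ‖∑ i, c i • x i‖ ^ 2 := by
  simp_rw [← real_inner_self_eq_norm_sq, sum_inner, inner_sum, real_inner_smul_left,
    real_inner_smul_right, mul_assoc]

theorem tendsto_pow_mul_one_add {t : ℝ} (ht : t ∈ Set.Icc (-1) 1) (ht1 : t ≠ 1) :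
    Tendsto (fun m : ℕ => t ^ m * (1 + t)) atTop (𝓝 0) := by
  rcases ht.1.eq_or_lt with rfl | hlt
  · simp
  · simpa using (tendsto_pow_atTop_nhds_zero_of_abs_lt_one
      (abs_lt.2 ⟨hlt, ht.2.lt_of_ne ht1⟩)).mul_const (1 + t)

theorem tendsto_sum_sum_mul_inner_pow_mul_one_add {x : ι → E} (hx : ∀ i, ‖x i‖ = 1)
    (hinj : Function.Injective x) (c : ι → ℝ) :
    Tendsto (fun m : ℕ => ∑ i, ∑ j, c i * c j * (⟪x i, x j⟫ ^ m * (1 + ⟪x i, x j⟫))) atTop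
      (𝓝 (2 * ∑ i, c i ^ 2)) := by
  classical
  have hlim : ∀ i j, Tendsto (fun m : ℕ => c i * c j * (⟪x i, x j⟫ ^ m * (1 + ⟪x i, x j⟫)))
      atTop (𝓝 (if i = j then 2 * c i ^ 2 else 0)) := by
    intro i j
    split_ifs with hij
    · subst hij
      simp only [real_inner_self_eq_norm_sq, hx, one_pow]
      exact tendsto_const_nhds.congr fun _ => by ring
    · have hne : ⟪x i, x j⟫ ≠ 1 := fun h =>
        hij (hinj ((inner_eq_one_iff_of_norm_eq_one (hx i) (hx j)).1 h))
      simpa using (tendsto_pow_mul_one_add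
        (real_inner_mem_Icc_of_norm_eq_one (hx i) (hx j)) hne).const_mul (c i * c j)
  simpa [Finset.mul_sum] using
    tendsto_finsetSum Finset.univ fun i _ => tendsto_finsetSum Finset.univ fun j _ => hlim i j

end InnerPowerKernels

theorem HasSum.sum_sum_mul {ι : Type*} [Fintype ι] {a : ℕ → ℝ} {u : ℕ → ι → ι → ℝ}
    {K : ι → ι → ℝ} (h : ∀ i j, HasSum (fun k => a k * u k i j) (K i j)) (c : ι → ℝ) :
    HasSum (fun k => a k * ∑ i, ∑ j, c i * c j * u k i j) (∑ i, ∑ j, c i * c j * K i j) := by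
  refine (hasSum_sum fun i _ => hasSum_sum fun j _ => (h i j).mul_left (c i * c j)).congr_fun
    fun k => ?_
  simp_rw [Finset.mul_sum, mul_left_comm (a k)]

theorem summable_one_third_pow_odd_mul_pow_odd {t : ℝ} (ht : |t| < 3) :
    Summable (fun k : ℕ => (1 / 3 : ℝ) ^ (2 * k + 1) * t ^ (2 * k + 1)) := by
  have hq : |(t / 3) ^ 2| < 1 := by
    rw [abs_pow, abs_div, abs_of_pos (by norm_num : (0 : ℝ) < 3)]
    exact pow_lt_one₀ (by positivity) ((div_lt_one (by norm_num)).2 ht) two_ne_zero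
  refine ((summable_geometric_of_abs_lt_one hq).mul_left (t / 3)).congr fun k => ?_
  rw [← pow_mul, ← mul_pow, ← pow_succ']
  ring

section SphereKernels

variable {E : Type*} [NormedAddCommGroup E] [InnerProductSpace ℝ E] {ι : Type*} [Fintype ι]

theorem sum_sum_mul_eqOn_one_add {f : ℝ → ℝ} (hf : ∀ t ∈ Set.Icc (-1 : ℝ) 1, f t = 1 + t)
    (x : ι → Metric.sphere (0 : E) 1) (c : ι → ℝ) :
    ∑ i, ∑ j, c i * c j * f ⟪(x i : E), (x j : E)⟫
      = (∑ i, c i) ^ 2 + ‖∑ i, c i • (x i : E)‖ ^ 2 := by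
  have hx (i : ι) : ‖(x i : E)‖ = 1 := norm_eq_of_mem_sphere (x i)
  simp_rw [← sum_sum_mul_inner_eq_norm_sq, sq, Finset.sum_mul_sum, ← Finset.sum_add_distrib,
    hf _ (real_inner_mem_Icc_of_norm_eq_one (hx _) (hx _)), mul_one_add]

theorem isPosDefKernel_sphere_of_eqOn_one_add {f : ℝ → ℝ}
    (hf : ∀ t ∈ Set.Icc (-1 : ℝ) 1, f t = 1 + t) :
    IsPosDefKernel (fun x y : Metric.sphere (0 : E) 1 => f ⟪(x : E), (y : E)⟫) := by
  intro n x c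
  rw [sum_sum_mul_eqOn_one_add hf]
  positivity

theorem not_isStrictPosDefKernel_sphere_of_eqOn_one_add {f : ℝ → ℝ}
    (hf : ∀ t ∈ Set.Icc (-1 : ℝ) 1, f t = 1 + t) {u v : Metric.sphere (0 : E) 1}
    (huv : ⟪(u : E), (v : E)⟫ = 0) :
    ¬ IsStrictPosDefKernel (fun x y : Metric.sphere (0 : E) 1 => f ⟪(x : E), (y : E)⟫) := by
  have hu : ⟪(u : E), (u : E)⟫ = 1 := inner_self_eq_one_of_norm_eq_one (norm_eq_of_mem_sphere u)
  have hv : ⟪(v : E), (v : E)⟫ = 1 := inner_self_eq_one_of_norm_eq_one (norm_eq_of_mem_sphere v)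
  have huv' : ⟪(v : E), (u : E)⟫ = 0 := by rw [real_inner_comm, huv]
  have hinj : Function.Injective ![u, -u, v, -v] := by
    intro a b hab
    have h := congrArg
      (fun w : Metric.sphere (0 : E) 1 => (⟪(w : E), (u : E)⟫, ⟪(w : E), (v : E)⟫)) hab
    fin_cases a <;> fin_cases b <;> norm_num [inner_neg_left, hu, hv, huv, huv'] at h <;> rfl
  rintro ⟨-, hstrict⟩
  have h := hstrict 4 ![u, -u, v, -v] ![1, 1, -1, -1] hinj (by simp)
  rw [sum_sum_mul_eqOn_one_add hf] at h
  simp [Fin.sum_univ_four] at h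

theorem not_isStrictPosDefKernel_sphere_of_neg_one {g : ℝ → ℝ} (hg : g (-1) = -g 1)
    (u : Metric.sphere (0 : E) 1) :
    ¬ IsStrictPosDefKernel (fun x y : Metric.sphere (0 : E) 1 => g ⟪(x : E), (y : E)⟫) := by
  have hu : ⟪(u : E), (u : E)⟫ = 1 := inner_self_eq_one_of_norm_eq_one (norm_eq_of_mem_sphere u)
  have hinj : Function.Injective ![u, -u] := by
    intro a b hab
    have h := congrArg (fun w : Metric.sphere (0 : E) 1 => ⟪(w : E), (u : E)⟫) hab
    fin_cases a <;> fin_cases b <;> norm_num [inner_neg_left, hu] at h <;> rfl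
  rintro ⟨-, hstrict⟩
  have h := hstrict 2 ![u, -u] ![1, 1] hinj (by simp)
  simp [Fin.sum_univ_two, hg] at h

end SphereKernels

section OddPowerSeries

variable {E : Type*} [NormedAddCommGroup E] [InnerProductSpace ℝ E] {ι : Type*} [Fintype ι]
  {g : ℝ → ℝ}
  (hg : ∀ t ∈ Set.Icc (-1 : ℝ) 1, g t = ∑' k : ℕ, (1 / 3 : ℝ) ^ (2 * k + 1) * t ^ (2 * k + 1))
include hg

theorem hasSum_of_eqOn_tsum_odd {t : ℝ} (ht : t ∈ Set.Icc (-1 : ℝ) 1) :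
    HasSum (fun k : ℕ => (1 / 3 : ℝ) ^ (2 * k + 1) * t ^ (2 * k + 1)) (g t) :=
  hg t ht ▸ (summable_one_third_pow_odd_mul_pow_odd
    ((abs_le.2 ht).trans_lt (by norm_num))).hasSum

theorem apply_neg_one_of_eqOn_tsum_odd : g (-1) = -g 1 := by
  refine (hasSum_of_eqOn_tsum_odd hg (t := -1) (by norm_num)).unique ?_
  simpa [Odd.neg_one_pow ⟨_, rfl⟩] using (hasSum_of_eqOn_tsum_odd hg (t := 1) (by norm_num)).neg

theorem hasSum_sum_sum_mul_of_eqOn_tsum_odd (x : ι → Metric.sphere (0 : E) 1) (c : ι → ℝ) :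
    HasSum (fun k : ℕ => (1 / 3 : ℝ) ^ (2 * k + 1) *
        ∑ i, ∑ j, c i * c j * ⟪(x i : E), (x j : E)⟫ ^ (2 * k + 1))
      (∑ i, ∑ j, c i * c j * g ⟪(x i : E), (x j : E)⟫) :=
  HasSum.sum_sum_mul (fun _ _ => hasSum_of_eqOn_tsum_odd hg
    (real_inner_mem_Icc_of_norm_eq_one (norm_eq_of_mem_sphere _) (norm_eq_of_mem_sphere _))) c

theorem isPosDefKernel_sphere_of_eqOn_tsum_odd :
    IsPosDefKernel (fun x y : Metric.sphere (0 : E) 1 => g ⟪(x : E), (y : E)⟫) := fun _ x c =>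
  (hasSum_sum_sum_mul_of_eqOn_tsum_odd hg x c).nonneg fun _ =>
    mul_nonneg (by positivity) (sum_sum_mul_inner_pow_nonneg _ c _)

variable {f : ℝ → ℝ} (hf : ∀ t ∈ Set.Icc (-1 : ℝ) 1, f t = 1 + t)
include hf

theorem hasSum_sum_sum_mul_mul_of_eqOn (x : ι → Metric.sphere (0 : E) 1) (c : ι → ℝ) :
    HasSum (fun k : ℕ => (1 / 3 : ℝ) ^ (2 * k + 1) *
        ∑ i, ∑ j, c i * c j *
          (⟪(x i : E), (x j : E)⟫ ^ (2 * k + 1) * (1 + ⟪(x i : E), (x j : E)⟫)))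
      (∑ i, ∑ j, c i * c j * (f ⟪(x i : E), (x j : E)⟫ * g ⟪(x i : E), (x j : E)⟫)) := by
  refine HasSum.sum_sum_mul (fun i j => ?_) c
  have ht := real_inner_mem_Icc_of_norm_eq_one (norm_eq_of_mem_sphere (x i))
    (norm_eq_of_mem_sphere (x j))
  rw [hf _ ht, mul_comm]
  simpa only [mul_assoc] using (hasSum_of_eqOn_tsum_odd hg ht).mul_right _

theorem isStrictPosDefKernel_sphere_mul_of_eqOn :
    IsStrictPosDefKernel (fun x y : Metric.sphere (0 : E) 1 =>
      f ⟪(x : E), (y : E)⟫ * g ⟪(x : E), (y : E)⟫) := by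
  have hterm_nonneg (n : ℕ) (x : Fin n → Metric.sphere (0 : E) 1) (c : Fin n → ℝ) (k : ℕ) :=
    mul_nonneg (pow_nonneg (by norm_num : (0 : ℝ) ≤ 1 / 3) (2 * k + 1))
      (sum_sum_mul_inner_pow_mul_one_add_nonneg (fun i => (x i : E)) c (2 * k + 1))
  refine ⟨fun n x c => (hasSum_sum_sum_mul_mul_of_eqOn hg hf x c).nonneg (hterm_nonneg n x c),
    fun n x c hx hc => ?_⟩
  dsimp only
  have hpos : 0 < 2 * ∑ i, c i ^ 2 := by
    obtain ⟨i, hi⟩ := Function.ne_iff.1 hc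
    exact mul_pos two_pos
      (Finset.sum_pos' (fun i _ => sq_nonneg _) ⟨i, Finset.mem_univ _, sq_pos_iff.2 hi⟩)
  have hodd : Tendsto (fun k : ℕ => 2 * k + 1) atTop atTop :=
    tendsto_atTop_mono (fun k => show k ≤ 2 * k + 1 by omega) tendsto_id
  obtain ⟨k, hk⟩ := (((tendsto_sum_sum_mul_inner_pow_mul_one_add
    (fun i => norm_eq_of_mem_sphere (x i)) (Subtype.val_injective.comp hx) c).comp hodd).eventually
      (lt_mem_nhds hpos)).exists
  exact hasSum_lt (hterm_nonneg n x c) (mul_pos (by positivity) hk) hasSum_zero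
    (hasSum_sum_sum_mul_mul_of_eqOn hg hf x c)

end OddPowerSeries

theorem product_of_nonstrict_can_be_strict
    (f g : ℝ → ℝ)
    (hf : ∀ t ∈ Set.Icc (-1 : ℝ) 1, f t = 1 + t)
    (hg : ∀ t ∈ Set.Icc (-1 : ℝ) 1,
      g t = ∑' k : ℕ, (1 / 3 : ℝ) ^ (2 * k + 1) * t ^ (2 * k + 1)) :
    (IsPosDefKernel
        (fun x y : Metric.sphere (0 : EllTwo) 1 => f ⟪(x : EllTwo), (y : EllTwo)⟫) ∧
      IsPosDefKernel
        (fun x y : Metric.sphere (0 : EllTwo) 1 => g ⟪(x : EllTwo), (y : EllTwo)⟫) ∧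
      ¬ IsStrictPosDefKernel
        (fun x y : Metric.sphere (0 : EllTwo) 1 => f ⟪(x : EllTwo), (y : EllTwo)⟫) ∧
      ¬ IsStrictPosDefKernel
        (fun x y : Metric.sphere (0 : EllTwo) 1 => g ⟪(x : EllTwo), (y : EllTwo)⟫)) ∧
    IsStrictPosDefKernel
      (fun x y : Metric.sphere (0 : EllTwo) 1 =>
        f ⟪(x : EllTwo), (y : EllTwo)⟫ * g ⟪(x : EllTwo), (y : EllTwo)⟫) := by
  have hsingle (i : ℕ) : (lp.single 2 i (1 : ℝ) : EllTwo) ∈ Metric.sphere (0 : EllTwo) 1 := by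
    simp [lp.norm_single]
  have horth : ⟪(lp.single 2 0 (1 : ℝ) : EllTwo), (lp.single 2 1 (1 : ℝ) : EllTwo)⟫ = 0 := by
    simp [lp.inner_single_left]
  exact ⟨⟨isPosDefKernel_sphere_of_eqOn_one_add hf, isPosDefKernel_sphere_of_eqOn_tsum_odd hg,
    not_isStrictPosDefKernel_sphere_of_eqOn_one_add hf (u := ⟨_, hsingle 0⟩) (v := ⟨_, hsingle 1⟩)
      horth,
    not_isStrictPosDefKernel_sphere_of_neg_one (apply_neg_one_of_eqOn_tsum_odd hg) ⟨_, hsingle 0⟩⟩,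
    isStrictPosDefKernel_sphere_mul_of_eqOn hg hf⟩
end
end
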